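/- arXiv:1312.5758 — 7 statements merged into one kernel-verified Lean document; each statement's English description precedes it below -/
import Mathlib

section
/- Two distinct triples i<j<k and i'<j'<k' of elements of [n] are inconsistent (i.e., there is no integer sequence x_1<x_2<...<x_n making both x_i,x_j,x_k and x_{i'},x_{j'},x_{k'} arithmetic progressions) if and only if either (i ≤ i', j ≥ j', k ≤ k') or (i ≥ i', j ≤ j', k ≥ k'). -/
/-- `t = (i,j,k)` is a triple with `1 ≤ i < j < k ≤ n`. -/
def IsTriple (n : ℕ) (t : ℕ × ℕ × ℕ) : Prop :=
  1 ≤ t.1 ∧ t.1 < t.2.1 ∧ t.2.1 < t.2.2 ∧ t.2.2 ≤ n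

/-- Two triples are consistent if some strictly increasing integer sequence
`x_1 < ⋯ < x_n` makes both of them arithmetic progressions. -/
def Consistent (n : ℕ) (t u : ℕ × ℕ × ℕ) : Prop :=
  ∃ x : ℕ → ℤ, (∀ i j, 1 ≤ i → i < j → j ≤ n → x i < x j) ∧
    x t.1 + x t.2.2 = 2 * x t.2.1 ∧ x u.1 + x u.2.2 = 2 * x u.2.1

/-!
Write `x` as partial sums of positive gaps `d m = x (m + 1) - x m`; then `(i,j,k)` is an
arithmetic progression iff the gaps over `[i,j)` and `[j,k)` have equal sums.

If `i ≤ i'`, `j' ≤ j` and `k ≤ k'`, monotonicity gives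
`x i' + x k' ≥ x i + x k = 2 x j ≥ 2 x j'`, so both progressions force equality everywhere and
the triples coincide.

Otherwise, after swapping the triples and reversing `[1,n]`, we may assume `j ≤ j'` and `k < k'`.
We then balance `(i,j,k)` by reweighting its left arm, and afterwards `(i',j',k')` by reweighting
the part of its right arm beyond `k`, which `(i,j,k)` does not see. Putting a heavy weight on
`[j,j')` beforehand makes the left arm of `(i',j',k')` outweigh the rest of its right arm, so the
second reweighting has a positive deficit to fill.
-/

open Finset

namespace Consistent

variable {n : ℕ}

theorem symm {t u : ℕ × ℕ × ℕ} (h : Consistent n t u) : Consistent n u t :=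
  let ⟨x, hx, ht, hu⟩ := h
  ⟨x, hx, hu, ht⟩

theorem of_reflect {i j k i' j' k' : ℕ}
    (h : Consistent n (n + 1 - k, n + 1 - j, n + 1 - i) (n + 1 - k', n + 1 - j', n + 1 - i')) :
    Consistent n (i, j, k) (i', j', k') := by
  obtain ⟨x, hx, ht, hu⟩ := h
  refine ⟨fun m => -x (n + 1 - m), fun p q hp hpq hq => ?_, ?_, ?_⟩
  · simpa using hx (n + 1 - q) (n + 1 - p) (by omega) (by omega) (by omega)
  · dsimp only at ht ⊢
    linarith
  · dsimp only at hu ⊢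
    linarith

theorem eq_of_le {t u : ℕ × ℕ × ℕ} (hc : Consistent n t u)
    (ht : IsTriple n t) (hu : IsTriple n u) (h : t.1 ≤ u.1 ∧ u.2.1 ≤ t.2.1 ∧ t.2.2 ≤ u.2.2) :
    t = u := by
  obtain ⟨i, j, k⟩ := t
  obtain ⟨i', j', k'⟩ := u
  obtain ⟨hi, hj, hk⟩ := h
  obtain ⟨x, hx, hxt, hxu⟩ := hc
  have hmono : StrictMonoOn x (Set.Icc 1 n) := fun a ha b hb hab => hx a b ha.1 hab hb.2
  simp only [IsTriple] at ht hu hi hj hk hxt hxu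
  have mi : i ∈ Set.Icc 1 n := ⟨by omega, by omega⟩
  have mj : j ∈ Set.Icc 1 n := ⟨by omega, by omega⟩
  have mk : k ∈ Set.Icc 1 n := ⟨by omega, by omega⟩
  have mi' : i' ∈ Set.Icc 1 n := ⟨by omega, by omega⟩
  have mj' : j' ∈ Set.Icc 1 n := ⟨by omega, by omega⟩
  have mk' : k' ∈ Set.Icc 1 n := ⟨by omega, by omega⟩
  have hxi := (hmono.le_iff_le mi mi').2 hi
  have hxj := (hmono.le_iff_le mj' mj).2 hj
  have hxk := (hmono.le_iff_le mk mk').2 hk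
  rw [hmono.injOn mi mi' (by linarith), hmono.injOn mj mj' (by linarith),
    hmono.injOn mk mk' (by linarith)]

end Consistent

theorem consistent_of_sum_Ico_eq {n i j k i' j' k' : ℕ} {d : ℕ → ℤ} (hd : ∀ m, 0 < d m)
    (hij : i ≤ j) (hjk : j ≤ k) (hij' : i' ≤ j') (hjk' : j' ≤ k')
    (ht : ∑ m ∈ Ico i j, d m = ∑ m ∈ Ico j k, d m)
    (hu : ∑ m ∈ Ico i' j', d m = ∑ m ∈ Ico j' k', d m) :
    Consistent n (i, j, k) (i', j', k') := by
  refine ⟨fun m => ∑ p ∈ range m, d p, fun p q _ hpq _ => ?_, ?_, ?_⟩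
  · have := sum_Ico_eq_sub d hpq.le
    have := sum_pos (fun m _ => hd m) (nonempty_Ico.2 hpq)
    dsimp only
    linarith
  · have := sum_Ico_eq_sub d hij
    have := sum_Ico_eq_sub d hjk
    dsimp only
    linarith
  · have := sum_Ico_eq_sub d hij'
    have := sum_Ico_eq_sub d hjk'
    dsimp only
    linarith

theorem disjoint_Ico_Ico_of_le {a b c e : ℕ} (h : b ≤ c) : Disjoint (Ico a b) (Ico c e) :=
  (Ico_disjoint_Ico_consecutive a b e).mono_right (Ico_subset_Ico_left h)

theorem sum_eq_mul_sum_of_eq_mul_off {A B : Finset ℕ} {d d' : ℕ → ℤ} {c : ℤ}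
    (h : ∀ m ∉ A, d' m = c * d m) (hAB : Disjoint A B) :
    ∑ m ∈ B, d' m = c * ∑ m ∈ B, d m := by
  rw [mul_sum]
  exact sum_congr rfl fun m hm => h m (disjoint_right.1 hAB hm)

/-- Fill the deficit `∑_B d - ∑_C d` on `A`, scaling all other gaps by `#A` so that the new
weights stay integral. -/
theorem exists_rescale_sum_add_sum_eq {d : ℕ → ℤ} (hd : ∀ m, 0 < d m) {A B C : Finset ℕ}
    (hA : A.Nonempty) (hAB : Disjoint A B) (hAC : Disjoint A C)
    (hCB : ∑ m ∈ C, d m < ∑ m ∈ B, d m) :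
    ∃ c : ℤ, 0 < c ∧ ∃ d' : ℕ → ℤ, (∀ m, 0 < d' m) ∧ (∀ m ∉ A, d' m = c * d m) ∧
      ∑ m ∈ C, d' m + ∑ m ∈ A, d' m = ∑ m ∈ B, d' m := by
  have hc : (0 : ℤ) < #A := by exact_mod_cast hA.card_pos
  let d' : ℕ → ℤ := fun m => if m ∈ A then ∑ m ∈ B, d m - ∑ m ∈ C, d m else #A * d m
  have hoff : ∀ m ∉ A, d' m = #A * d m := fun m hm => if_neg hm
  refine ⟨#A, hc, d', fun m => ?_, hoff, ?_⟩
  · by_cases hm : m ∈ A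
    · simp only [d', if_pos hm]
      linarith
    · rw [hoff m hm]
      exact mul_pos hc (hd m)
  · rw [sum_eq_mul_sum_of_eq_mul_off hoff hAB, sum_eq_mul_sum_of_eq_mul_off hoff hAC,
      sum_congr rfl fun m hm => if_pos hm, sum_const, nsmul_eq_mul]
    ring

theorem consistent_of_mid_le_of_right_lt {n i j k i' j' k' : ℕ} (hij : i < j) (hjk : j < k)
    (hij' : i' < j') (hjk' : j' < k') (hj : j ≤ j') (hk : k < k') (h : i' < i ∨ j < j') :
    Consistent n (i, j, k) (i', j', k') := by
  let d₀ : ℕ → ℤ := fun m => if m ∈ Ico j j' then k else 1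
  have hd₀ : ∀ m, 0 < d₀ m := fun m => by
    dsimp only [d₀]
    split_ifs <;> omega
  obtain ⟨c₁, hc₁, d₁, hd₁, hd₁off, ht⟩ := exists_rescale_sum_add_sum_eq hd₀ (nonempty_Ico.2 hij)
    (Ico_disjoint_Ico_consecutive i j k) (disjoint_empty_right _)
    (by simpa using sum_pos (fun m _ => hd₀ m) (nonempty_Ico.2 hjk))
  rw [sum_empty, zero_add] at ht
  set l := max j' k
  have hlt : ∑ m ∈ Ico j' l, d₁ m < ∑ m ∈ Ico i' j', d₁ m := by
    rcases hj.lt_or_eq with hj | rfl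
    · have hflat : ∀ m ∈ Ico j' l, d₁ m = c₁ := fun m hm => by
        simp only [mem_Ico] at hm
        rw [hd₁off m (by simp only [mem_Ico]; omega)]
        simp [d₀, show ¬ m < j' by omega]
      have hpeak : d₁ (j' - 1) = c₁ * k := by
        rw [hd₁off _ (by simp only [mem_Ico]; omega)]
        simp [d₀, show j ≤ j' - 1 by omega, show j' - 1 < j' by omega]
      calc ∑ m ∈ Ico j' l, d₁ m = ((l - j' : ℕ) : ℤ) * c₁ := by
            rw [sum_congr rfl hflat, sum_const, Nat.card_Ico, nsmul_eq_mul]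
        _ < c₁ * k := by
            rw [mul_comm]
            exact mul_lt_mul_of_pos_left (by omega) hc₁
        _ ≤ ∑ m ∈ Ico i' j', d₁ m := hpeak ▸ single_le_sum (fun m _ => (hd₁ m).le)
            (by simp only [mem_Ico]; omega)
    · have hi : i' < i := h.resolve_right (lt_irrefl j)
      rw [show l = k from max_eq_right hjk.le, ← ht,
        ← sum_Ico_consecutive _ hi.le hij.le]
      linarith [sum_pos (fun m _ => hd₁ m) (nonempty_Ico.2 hi)]
  obtain ⟨c₂, -, d₂, hd₂, hd₂off, hu⟩ := exists_rescale_sum_add_sum_eq hd₁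
    (nonempty_Ico.2 (max_lt hjk' hk)) (disjoint_Ico_Ico_of_le (le_max_left j' k)).symm
    (Ico_disjoint_Ico_consecutive j' l k').symm hlt
  refine consistent_of_sum_Ico_eq hd₂ hij.le hjk.le hij'.le hjk'.le ?_ ?_
  · rw [sum_eq_mul_sum_of_eq_mul_off hd₂off (disjoint_Ico_Ico_of_le (by omega)).symm,
      sum_eq_mul_sum_of_eq_mul_off hd₂off (disjoint_Ico_Ico_of_le (by omega)).symm, ht]
  · rw [← hu, sum_Ico_consecutive _ (le_max_left j' k) (max_le hjk'.le hk.le)]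

theorem consistent_of_mid_le {n i j k i' j' k' : ℕ} (ht : IsTriple n (i, j, k))
    (hu : IsTriple n (i', j', k')) (hj : j ≤ j') (h₁ : ¬ (i ≤ i' ∧ j' ≤ j ∧ k ≤ k'))
    (h₂ : ¬ (i' ≤ i ∧ j ≤ j' ∧ k' ≤ k)) :
    Consistent n (i, j, k) (i', j', k') := by
  simp only [IsTriple] at ht hu
  rcases lt_or_ge k k' with hk | hk
  · exact consistent_of_mid_le_of_right_lt (by omega) (by omega) (by omega) (by omega) hj hk
      (by omega)
  · -- now `i < i'`, and reversing `[1,n]` brings us back to the first case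
    exact Consistent.of_reflect (consistent_of_mid_le_of_right_lt (by omega) (by omega)
      (by omega) (by omega) (by omega) (by omega) (by omega)).symm

theorem stmt0_general (n : ℕ) (t u : ℕ × ℕ × ℕ)
    (ht : IsTriple n t) (hu : IsTriple n u) (hne : t ≠ u) :
    ¬ Consistent n t u ↔
      (t.1 ≤ u.1 ∧ u.2.1 ≤ t.2.1 ∧ t.2.2 ≤ u.2.2) ∨
      (u.1 ≤ t.1 ∧ t.2.1 ≤ u.2.1 ∧ u.2.2 ≤ t.2.2) := by
  constructor
  · intro hc
    by_contra hnest
    obtain ⟨i, j, k⟩ := t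
    obtain ⟨i', j', k'⟩ := u
    rcases le_total j j' with hj | hj
    · exact hc (consistent_of_mid_le ht hu hj (hnest <| .inl ·) (hnest <| .inr ·))
    · exact hc (consistent_of_mid_le hu ht hj (hnest <| .inr ·) (hnest <| .inl ·)).symm
  · rintro (h | h) hc
    · exact hne (hc.eq_of_le ht hu h)
    · exact hne (hc.symm.eq_of_le hu ht h).symm

theorem stmt0 (n : ℕ) (hn : 3 ≤ n) (t u : ℕ × ℕ × ℕ)
    (ht : IsTriple n t) (hu : IsTriple n u) (hne : t ≠ u) :
    ¬ Consistent n t u ↔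
      (t.1 ≤ u.1 ∧ u.2.1 ≤ t.2.1 ∧ t.2.2 ≤ u.2.2) ∨
      (u.1 ≤ t.1 ∧ t.2.1 ≤ u.2.1 ∧ u.2.2 ≤ t.2.2) :=
  stmt0_general n t u ht hu hne
end

section
/- Valid subsets of the set of 3-element subsets of [n] are in bijection with antichains of the poset P_n = {(i,j,k) ∈ [n]³ : i+j < n+1 < j+k} with componentwise order, via mapping a triple i<j<k to (i, n+1-j, k). -/
/-- Two (distinct) triples `i<j<k` and `i'<j'<k'` are consistent iff neither
`(i≤i', j≥j', k≤k')` nor `(i≥i', j≤j', k≥k')` holds. -/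
def ConsistentPair (t u : ℕ × ℕ × ℕ) : Prop :=
  ¬(t.1 ≤ u.1 ∧ u.2.1 ≤ t.2.1 ∧ t.2.2 ≤ u.2.2) ∧
  ¬(u.1 ≤ t.1 ∧ t.2.1 ≤ u.2.1 ∧ u.2.2 ≤ t.2.2)

/-- A collection of triples in `[n]` is valid if any two distinct members are consistent. -/
def ValidSet (n : ℕ) (S : Set (ℕ × ℕ × ℕ)) : Prop :=
  (∀ t ∈ S, IsTriple n t) ∧ S.Pairwise ConsistentPair

/-- The set `P_n = {(i,j,k) ∈ [n]³ : i + j < n + 1 < j + k}`. -/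
def PnSet (n : ℕ) : Set (ℕ × ℕ × ℕ) :=
  {p | (1 ≤ p.1 ∧ p.1 ≤ n) ∧ (1 ≤ p.2.1 ∧ p.2.1 ≤ n) ∧ (1 ≤ p.2.2 ∧ p.2.2 ≤ n) ∧
       p.1 + p.2.1 < n + 1 ∧ n + 1 < p.2.1 + p.2.2}

namespace Set

variable {α β : Type*} {f : α → β} {g : β → α} {s : Set α} {t : Set β}

theorem InvOn.bijOn_image_setOf (h : InvOn g f s t) (hf : MapsTo f s t) (hg : MapsTo g t s)
    (Q : Set β → Prop) :
    BijOn (image f) {S | S ⊆ s ∧ Q (f '' S)} {A | A ⊆ t ∧ Q A} := by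
  refine InvOn.bijOn (f' := image g) ⟨fun S hS => h.1.image_image' hS.1,
    fun A hA => h.2.image_image' hA.1⟩ ?_ ?_
  · exact fun S hS => ⟨(hf.mono_left hS.1).image_subset, hS.2⟩
  · intro A hA
    refine ⟨(hg.mono_left hA.1).image_subset, ?_⟩
    rw [h.2.image_image' hA.1]
    exact hA.2

end Set

open Set

def flipMid (n : ℕ) (t : ℕ × ℕ × ℕ) : ℕ × ℕ × ℕ := (t.1, n + 1 - t.2.1, t.2.2)

section flipMid

variable {n : ℕ} {t u : ℕ × ℕ × ℕ}

theorem flipMid_flipMid (ht : t.2.1 ≤ n + 1) : flipMid n (flipMid n t) = t := by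
  simp [flipMid, Nat.sub_sub_self ht]

theorem flipMid_le_flipMid_iff (ht : t.2.1 ≤ n + 1) (hu : u.2.1 ≤ n + 1) :
    flipMid n t ≤ flipMid n u ↔ t.1 ≤ u.1 ∧ u.2.1 ≤ t.2.1 ∧ t.2.2 ≤ u.2.2 := by
  obtain ⟨i, j, k⟩ := t
  obtain ⟨i', j', k'⟩ := u
  simp only [flipMid, Prod.mk_le_mk] at *
  omega

theorem IsTriple.snd_fst_le (ht : IsTriple n t) : t.2.1 ≤ n + 1 := by
  unfold IsTriple at ht
  omega

theorem consistentPair_iff_flipMid (ht : IsTriple n t) (hu : IsTriple n u) :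
    ConsistentPair t u ↔ ¬flipMid n t ≤ flipMid n u ∧ ¬flipMid n u ≤ flipMid n t := by
  rw [flipMid_le_flipMid_iff ht.snd_fst_le hu.snd_fst_le,
    flipMid_le_flipMid_iff hu.snd_fst_le ht.snd_fst_le, ConsistentPair]

theorem mapsTo_flipMid_pnSet : MapsTo (flipMid n) {t | IsTriple n t} (PnSet n) := by
  rintro ⟨i, j, k⟩ ht
  simp only [IsTriple, mem_ofPred_eq] at ht
  simp only [flipMid, PnSet, mem_ofPred_eq]
  omega

theorem mapsTo_flipMid_isTriple : MapsTo (flipMid n) (PnSet n) {t | IsTriple n t} := by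
  rintro ⟨i, j, k⟩ hp
  simp only [PnSet, mem_ofPred_eq] at hp
  simp only [flipMid, IsTriple, mem_ofPred_eq]
  omega

theorem invOn_flipMid : InvOn (flipMid n) (flipMid n) {t | IsTriple n t} (PnSet n) :=
  ⟨fun _ ht => flipMid_flipMid (IsTriple.snd_fst_le ht),
    fun _ hp => flipMid_flipMid (by have := hp.2.1.2; omega)⟩

theorem validSet_iff_isAntichain_image_flipMid {S : Set (ℕ × ℕ × ℕ)} :
    ValidSet n S ↔ S ⊆ {t | IsTriple n t} ∧ IsAntichain (· ≤ ·) (flipMid n '' S) := by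
  refine and_congr_right fun hS => ?_
  have hinj : InjOn (flipMid n) S := invOn_flipMid.1.injOn.mono hS
  constructor
  · rintro hcons _ ⟨t, ht, rfl⟩ _ ⟨u, hu, rfl⟩ hne
    exact ((consistentPair_iff_flipMid (hS _ ht) (hS _ hu)).1
      (hcons ht hu fun h => hne (h ▸ rfl))).1
  · intro hanti t ht u hu hne
    have hne' : flipMid n t ≠ flipMid n u := fun h => hne (hinj ht hu h)
    exact (consistentPair_iff_flipMid (hS _ ht) (hS _ hu)).2
      ⟨hanti (mem_image_of_mem _ ht) (mem_image_of_mem _ hu) hne',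
        hanti (mem_image_of_mem _ hu) (mem_image_of_mem _ ht) hne'.symm⟩

end flipMid

/-- Valid collections of triples are in bijection with antichains of `P_n`
(with the componentwise order), via `(i,j,k) ↦ (i, n+1-j, k)`. -/
theorem stmt2 (n : ℕ) :
    Set.BijOn (fun S : Set (ℕ × ℕ × ℕ) =>
        (fun t : ℕ × ℕ × ℕ => (t.1, n + 1 - t.2.1, t.2.2)) '' S)
      {S | ValidSet n S}
      {A | A ⊆ PnSet n ∧ IsAntichain (· ≤ ·) A} := by
  have hvalid : {S | ValidSet n S} =
      {S | S ⊆ {t | IsTriple n t} ∧ IsAntichain (· ≤ ·) (flipMid n '' S)} :=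
    Set.ext fun _ => validSet_iff_isAntichain_image_flipMid
  rw [hvalid]
  exact invOn_flipMid.bijOn_image_setOf mapsTo_flipMid_pnSet mapsTo_flipMid_isTriple _
end

section
/- For n ≥ 2 and a triple (a,b,k) of positive integers with 1 ≤ k ≤ b ≤ n-1-a, the tableau Add(T⁰_{n-1}; a, b, k) is a join-irreducible element of M_n, and every join-irreducible of M_n arises uniquely in this way. -/
/-- The cells of the Young diagram with row lengths `lam`: `(a,b)` with
`a,b ≥ 1` and `b ≤ lam a` (rows and columns are 1-indexed). -/
def CellOf (lam : ℕ → ℕ) (a b : ℕ) : Prop := 1 ≤ a ∧ 1 ≤ b ∧ b ≤ lam a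

instance (lam : ℕ → ℕ) (a b : ℕ) : Decidable (CellOf lam a b) :=
  inferInstanceAs (Decidable (1 ≤ a ∧ 1 ≤ b ∧ b ≤ lam a))

/-- Extension of a tableau by the boundary conventions `T_{a,0} = a`, `T_{0,b} = 0`. -/
def ExtT (T : ℕ → ℕ → ℕ) (a b : ℕ) : ℕ :=
  if b = 0 then a else if a = 0 then 0 else T a b

/-- `T` is a semistandard Young tableau of shape `lam` (1-indexed, with positive
entries, equal to `0` outside the shape): rows are weakly increasing and columns
strictly increasing, expressed with the conventions `T_{a,0} = a`, `T_{0,b} = 0`. -/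
def IsSSYTShape (lam : ℕ → ℕ) (T : ℕ → ℕ → ℕ) : Prop :=
  (∀ a b, ¬ CellOf lam a b → T a b = 0) ∧
  (∀ a b, CellOf lam a b → ExtT T a (b - 1) ≤ ExtT T a b) ∧
  (∀ a b, CellOf lam a b → ExtT T (a - 1) b < ExtT T a b)

/-- Row lengths of the staircase shape `δ_{n-1} = (n-2, n-3, …, 1)`:
row `a` has `n-1-a` cells. -/
def staircase (n : ℕ) : ℕ → ℕ := fun a => n - 1 - a

/-- Membership in `M_n`: SSYT of shape `δ_{n-1}` with all entries at most `n-1`. -/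
def MnMem (n : ℕ) (T : ℕ → ℕ → ℕ) : Prop :=
  IsSSYTShape (staircase n) T ∧ ∀ a b, T a b ≤ n - 1

/-- The entry of `T` at `(a,b)` is reducible: `T_{a,b} - T_{a,b-1} ≥ 1` and
`T_{a,b} - T_{a-1,b} ≥ 2`, with the conventions `T_{a,0} = a`, `T_{0,b} = 0`. -/
def Reducible (T : ℕ → ℕ → ℕ) (a b : ℕ) : Prop :=
  ExtT T a (b - 1) + 1 ≤ ExtT T a b ∧ ExtT T (a - 1) b + 2 ≤ ExtT T a b

/-- The minimal SSYT of shape `lam`, whose `(a,b)`-entry is `a`. -/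
def minT (lam : ℕ → ℕ) : ℕ → ℕ → ℕ := fun a b => if CellOf lam a b then a else 0

/-- `AddT lam T a b k` adds `k` to every entry of `T` in a cell `(x,y)` of `lam`
with `x ≥ a` and `y ≥ b`. -/
def AddT (lam : ℕ → ℕ) (T : ℕ → ℕ → ℕ) (a b k : ℕ) : ℕ → ℕ → ℕ :=
  fun x y => if CellOf lam x y ∧ a ≤ x ∧ b ≤ y then T x y + k else T x y

/-- `S` is covered by `T` in `M_n` (entrywise order). -/
def MnCovBy (n : ℕ) (S T : ℕ → ℕ → ℕ) : Prop :=
  MnMem n S ∧ S < T ∧ ∀ U, MnMem n U → ¬(S < U ∧ U < T)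

/-- `T` is a join-irreducible of `M_n`: a (non-minimal) element of `M_n`
covering exactly one element. -/
def MnJoinIrred (n : ℕ) (T : ℕ → ℕ → ℕ) : Prop :=
  MnMem n T ∧ ∃! S, MnCovBy n S T

/-!
The covers of `T` in `M_n` are exactly the tableaux obtained by lowering one reducible entry of
`T` by one: lowering a reducible entry keeps the tableau semistandard, and if `S < T` then `T` is
reducible at a minimal cell where they differ. Hence `T` is join-irreducible iff it has exactly
one reducible entry. At an irreducible cell, `T_{x,y} = max (T_{x,y-1}, T_{x-1,y} + 1)`, so an
SSYT is determined by its entries at reducible cells. `Add(T⁰; a, b, k)` is reducible exactly at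
`(a, b)`, where its entry is `a + k`; so a tableau whose only reducible cell is `(a, b)` equals
`Add(T⁰; a, b, T_{a,b} - a)`, and the bound `n - 1` at the bottom of column `b` gives `k ≤ b`.
-/

def decT (T : ℕ → ℕ → ℕ) (a b : ℕ) : ℕ → ℕ → ℕ :=
  fun x y => if x = a ∧ y = b then T x y - 1 else T x y

section Tableaux

variable {lam : ℕ → ℕ} {S T : ℕ → ℕ → ℕ} {a b k x y : ℕ}

lemma extT_of_pos (hx : 0 < x) (hy : 0 < y) : ExtT T x y = T x y := by
  simp [ExtT, hx.ne', hy.ne']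

lemma extT_congr (h : S x y = T x y) : ExtT S x y = ExtT T x y := by
  simp [ExtT, h]

lemma extT_decT (ha : 0 < a) (hb : 0 < b) :
    ExtT (decT T a b) x y = if x = a ∧ y = b then ExtT T x y - 1 else ExtT T x y := by
  unfold ExtT decT
  split_ifs <;> omega

lemma decT_covBy (h : T a b ≠ 0) : decT T a b ⋖ T := by
  refine Pi.covBy_iff.2 ⟨a, Pi.covBy_iff.2 ⟨b, ?_, fun y hy => ?_⟩, fun x hx => ?_⟩
  · simp only [decT, and_self, if_true, Nat.covBy_iff_add_one_eq]
    omega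
  · simp [decT, hy]
  · funext y
    simp [decT, hx]

lemma eq_of_decT_eq_decT (h : T a b ≠ 0) (hxy : decT T x y = decT T a b) : x = a ∧ y = b := by
  by_contra hne
  have := congrFun (congrFun hxy a) b
  simp only [decT, and_self, if_true] at this
  rw [if_neg fun h' => hne ⟨h'.1.symm, h'.2.symm⟩] at this
  omega

namespace IsSSYTShape

lemma cell_of_reducible (hT : IsSSYTShape lam T) (hr : Reducible T x y) : CellOf lam x y := by
  by_contra hc
  have h0 := hT.1 x y hc
  obtain ⟨h1, h2⟩ := hr
  simp only [ExtT] at h1 h2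
  split_ifs at h1 h2 <;> omega

lemma entry_ne_zero_of_reducible (hT : IsSSYTShape lam T) (hr : Reducible T x y) :
    T x y ≠ 0 := by
  have hc := hT.cell_of_reducible hr
  have := hr.2
  rw [extT_of_pos hc.1 hc.2.1] at this
  omega

lemma le_extT (hT : IsSSYTShape lam T) (hy : y ≤ lam x) : x ≤ ExtT T x y := by
  induction y with
  | zero => rfl
  | succ y ih =>
    rcases Nat.eq_zero_or_pos x with rfl | hx
    · exact Nat.zero_le _
    · exact (ih (by omega)).trans (hT.2.1 x (y + 1) ⟨hx, by omega, hy⟩)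

lemma extT_eq_max (hT : IsSSYTShape lam T) (hc : CellOf lam x y) (hr : ¬Reducible T x y) :
    ExtT T x y = max (ExtT T x (y - 1)) (ExtT T (x - 1) y + 1) := by
  have := hT.2.1 x y hc
  have := hT.2.2 x y hc
  unfold Reducible at hr
  omega

lemma ext_of_reducible (hS : IsSSYTShape lam S) (hT : IsSSYTShape lam T)
    (h : ∀ x y, Reducible S x y ∨ Reducible T x y → S x y = T x y) : S = T := by
  suffices ∀ m x y, x + y = m → S x y = T x y from funext fun x => funext fun y => this _ x y rfl
  intro m
  induction m using Nat.strong_induction_on with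
  | _ m ih =>
    rintro x y rfl
    by_cases hc : CellOf lam x y
    · by_cases hr : Reducible S x y ∨ Reducible T x y
      · exact h x y hr
      push Not at hr
      have hprev : ∀ x' y', x' + y' < x + y → ExtT S x' y' = ExtT T x' y' :=
        fun x' y' h' => extT_congr (ih _ h' x' y' rfl)
      have hS' := hS.extT_eq_max hc hr.1
      rw [hprev x (y - 1) (by have := hc.2.1; omega), hprev (x - 1) y (by have := hc.1; omega),
        ← hT.extT_eq_max hc hr.2, extT_of_pos hc.1 hc.2.1, extT_of_pos hc.1 hc.2.1] at hS'
      exact hS'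
    · rw [hS.1 x y hc, hT.1 x y hc]

lemma decT (hT : IsSSYTShape lam T) (hr : Reducible T a b) : IsSSYTShape lam (decT T a b) := by
  have hc := hT.cell_of_reducible hr
  obtain ⟨hrow, hcol⟩ := hr
  refine ⟨fun x y hxy => ?_, fun x y hxy => ?_, fun x y hxy => ?_⟩
  · have hne : ¬(x = a ∧ y = b) := by
      rintro ⟨rfl, rfl⟩
      exact hxy hc
    simp [_root_.decT, hne, hT.1 x y hxy]
  · have := hT.2.1 x y hxy
    rw [extT_decT hc.1 hc.2.1, extT_decT hc.1 hc.2.1]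
    by_cases hab : x = a ∧ y = b
    · obtain ⟨rfl, rfl⟩ := hab
      split_ifs <;> omega
    · rw [if_neg hab]
      split_ifs with h
      · obtain ⟨rfl, -⟩ := h
        omega
      · exact this
  · have := hT.2.2 x y hxy
    rw [extT_decT hc.1 hc.2.1, extT_decT hc.1 hc.2.1]
    by_cases hab : x = a ∧ y = b
    · obtain ⟨rfl, rfl⟩ := hab
      split_ifs <;> omega
    · rw [if_neg hab]
      split_ifs <;> omega

lemma exists_reducible_of_lt (hS : IsSSYTShape lam S) (hT : IsSSYTShape lam T) (hST : S < T) :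
    ∃ a b, Reducible T a b ∧ S a b < T a b := by
  classical
  obtain ⟨x, hx⟩ := (Pi.lt_def.1 hST).2
  obtain ⟨y, hy⟩ := (Pi.lt_def.1 hx).2
  have hex : ∃ m, ∃ a b, a + b = m ∧ S a b < T a b := ⟨_, x, y, rfl, hy⟩
  obtain ⟨a, b, hab, hlt⟩ := Nat.find_spec hex
  have hmin : ∀ x y, x + y < a + b → ExtT S x y = ExtT T x y := fun x y h =>
    extT_congr <| (hST.le x y).antisymm <| not_lt.1 fun h' =>
      Nat.find_min hex (hab ▸ h) ⟨x, y, rfl, h'⟩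
  have hc : CellOf lam a b := by
    by_contra hc
    rw [hT.1 a b hc] at hlt
    exact Nat.not_lt_zero _ hlt
  have hrow := hS.2.1 a b hc
  have hcol := hS.2.2 a b hc
  rw [hmin a (b - 1) (by have := hc.2.1; omega), extT_of_pos hc.1 hc.2.1] at hrow
  rw [hmin (a - 1) b (by have := hc.1; omega), extT_of_pos hc.1 hc.2.1] at hcol
  refine ⟨a, b, ?_, hlt⟩
  rw [Reducible, extT_of_pos hc.1 hc.2.1]
  omega

end IsSSYTShape

lemma addT_minT_apply :
    AddT lam (minT lam) a b k x y =
      if CellOf lam x y then x + if a ≤ x ∧ b ≤ y then k else 0 else 0 := by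
  unfold AddT minT
  by_cases h : CellOf lam x y <;> by_cases h' : a ≤ x ∧ b ≤ y <;> simp [h, h']

lemma isSSYTShape_addT_minT : IsSSYTShape lam (AddT lam (minT lam) a b k) := by
  refine ⟨fun x y hc => by simp [addT_minT_apply, hc], fun x y hc => ?_, fun x y hc => ?_⟩ <;>
  · simp only [ExtT, addT_minT_apply] at *
    split_ifs at * <;> simp only [CellOf] at * <;> omega

lemma reducible_addT_minT_iff (hlam : Antitone lam) (ha : 0 < a) (hk : 0 < k)
    (hab : CellOf lam a b) : Reducible (AddT lam (minT lam) a b k) x y ↔ x = a ∧ y = b := by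
  by_cases hc : CellOf lam x y
  · have := hlam (Nat.sub_le x 1)
    simp only [Reducible, ExtT, addT_minT_apply] at *
    split_ifs at * <;> simp only [CellOf] at * <;> omega
  · refine iff_of_false (fun hr => hc (isSSYTShape_addT_minT.cell_of_reducible hr)) ?_
    rintro ⟨rfl, rfl⟩
    exact hc hab

lemma addT_minT_inj {a' b' k' : ℕ} (hlam : Antitone lam) (ha : 0 < a) (hk : 0 < k)
    (hab : CellOf lam a b) (ha' : 0 < a') (hk' : 0 < k') (hab' : CellOf lam a' b')
    (h : AddT lam (minT lam) a b k = AddT lam (minT lam) a' b' k') :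
    a = a' ∧ b = b' ∧ k = k' := by
  have hr := (reducible_addT_minT_iff hlam ha hk hab (x := a) (y := b)).2 ⟨rfl, rfl⟩
  rw [h, reducible_addT_minT_iff hlam ha' hk' hab'] at hr
  obtain ⟨rfl, rfl⟩ := hr
  have := congrFun (congrFun h a) b
  simp only [addT_minT_apply, if_pos hab, le_refl, and_self, if_true] at this
  exact ⟨rfl, rfl, by omega⟩

end Tableaux

section Staircase

variable {n a b k : ℕ} {S T : ℕ → ℕ → ℕ}

lemma antitone_staircase : Antitone (staircase n) :=
  fun _ _ h => Nat.sub_le_sub_left h _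

lemma cellOf_staircase {x y : ℕ} :
    CellOf (staircase n) x y ↔ 0 < x ∧ 0 < y ∧ x + y ≤ n - 1 := by
  simp only [CellOf, staircase]
  omega

lemma MnMem.decT (hT : MnMem n T) (hr : Reducible T a b) : MnMem n (decT T a b) :=
  ⟨hT.1.decT hr, fun x y => ((decT_covBy (hT.1.entry_ne_zero_of_reducible hr)).le x y).trans
    (hT.2 x y)⟩

lemma mnCovBy_iff (hT : MnMem n T) :
    MnCovBy n S T ↔ ∃ a b, Reducible T a b ∧ S = decT T a b := by
  constructor
  · rintro ⟨hS, hST, hmin⟩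
    obtain ⟨a, b, hr, hlt⟩ := hS.1.exists_reducible_of_lt hT.1 hST
    have hSle : S ≤ decT T a b := fun x y => by
      change S x y ≤ decT T a b x y
      unfold decT
      split_ifs with h
      · obtain ⟨rfl, rfl⟩ := h
        omega
      · exact hST.le x y
    refine ⟨a, b, hr, hSle.eq_of_not_lt fun hlt' => hmin _ (hT.decT hr) ⟨hlt', ?_⟩⟩
    exact (decT_covBy (hT.1.entry_ne_zero_of_reducible hr)).lt
  · rintro ⟨a, b, hr, rfl⟩
    have hcov := decT_covBy (hT.1.entry_ne_zero_of_reducible hr)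
    exact ⟨hT.decT hr, hcov.lt, fun U _ hU => hcov.2 hU.1 hU.2⟩

lemma mnJoinIrred_iff : MnJoinIrred n T ↔ MnMem n T ∧ ∃! p : ℕ × ℕ, Reducible T p.1 p.2 := by
  refine and_congr_right fun hT => ?_
  simp only [mnCovBy_iff hT]
  constructor
  · rintro ⟨_, ⟨a, b, hr, rfl⟩, huniq⟩
    refine ⟨(a, b), hr, fun ⟨x, y⟩ hxy => ?_⟩
    obtain ⟨rfl, rfl⟩ := eq_of_decT_eq_decT (hT.1.entry_ne_zero_of_reducible hr)
      (huniq _ ⟨x, y, hxy, rfl⟩)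
    rfl
  · rintro ⟨⟨a, b⟩, hr, huniq⟩
    refine ⟨decT T a b, ⟨a, b, hr, rfl⟩, ?_⟩
    rintro _ ⟨x, y, hxy, rfl⟩
    cases huniq (x, y) hxy
    rfl

lemma mnMem_addT_minT (hkb : k ≤ b) : MnMem n (AddT (staircase n) (minT (staircase n)) a b k) := by
  refine ⟨isSSYTShape_addT_minT, fun x y => ?_⟩
  rw [addT_minT_apply]
  split_ifs with hc <;> simp only [CellOf, staircase] at hc <;> omega

lemma MnMem.eq_addT_minT (hT : MnMem n T) (hr : Reducible T a b)
    (huniq : ∀ x y, Reducible T x y → x = a ∧ y = b) :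
    ∃ k, (1 ≤ a ∧ 1 ≤ k ∧ k ≤ b ∧ a + b ≤ n - 1) ∧
      T = AddT (staircase n) (minT (staircase n)) a b k := by
  have hc := hT.1.cell_of_reducible hr
  obtain ⟨ha, hb, hab⟩ := cellOf_staircase.1 hc
  have hk : a < T a b := by
    have := hT.1.le_extT (x := a) (y := b - 1) (by have := hc.2.2; omega)
    have := hr.1
    rw [extT_of_pos ha hb] at this
    omega
  have hJ : T = AddT (staircase n) (minT (staircase n)) a b (T a b - a) := by
    refine hT.1.ext_of_reducible isSSYTShape_addT_minT fun x y hxy => ?_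
    obtain ⟨rfl, rfl⟩ : x = a ∧ y = b :=
      hxy.elim (huniq x y) (reducible_addT_minT_iff antitone_staircase ha (by omega) hc).1
    rw [addT_minT_apply, if_pos hc, if_pos ⟨le_rfl, le_rfl⟩]
    omega
  have hkb : T a b - a ≤ b := by
    have hbound := hT.2 (n - 1 - b) b
    rw [hJ, addT_minT_apply, if_pos (cellOf_staircase.2 ⟨by omega, hb, by omega⟩),
      if_pos ⟨by omega, le_rfl⟩] at hbound
    omega
  exact ⟨T a b - a, ⟨ha, by omega, hkb, hab⟩, hJ⟩

end Staircase

theorem stmt4_general (n : ℕ) :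
    (∀ a b k : ℕ, 1 ≤ a → 1 ≤ k → k ≤ b → a + b ≤ n - 1 →
      MnJoinIrred n (AddT (staircase n) (minT (staircase n)) a b k)) ∧
    (∀ T : ℕ → ℕ → ℕ, MnJoinIrred n T →
      ∃! x : ℕ × ℕ × ℕ,
        (1 ≤ x.1 ∧ 1 ≤ x.2.2 ∧ x.2.2 ≤ x.2.1 ∧ x.1 + x.2.1 ≤ n - 1) ∧
        T = AddT (staircase n) (minT (staircase n)) x.1 x.2.1 x.2.2) := by
  refine ⟨fun a b k ha hk hkb hab => ?_, fun T hT => ?_⟩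
  · have hc := cellOf_staircase.2 ⟨ha, by omega, hab⟩
    refine mnJoinIrred_iff.2 ⟨mnMem_addT_minT hkb, (a, b), ?_, fun p hp => ?_⟩
    · exact (reducible_addT_minT_iff antitone_staircase ha hk hc).2 ⟨rfl, rfl⟩
    · obtain ⟨h1, h2⟩ := (reducible_addT_minT_iff antitone_staircase ha hk hc).1 hp
      exact Prod.ext h1 h2
  · obtain ⟨hTm, ⟨a, b⟩, hr, huniq⟩ := mnJoinIrred_iff.1 hT
    obtain ⟨k, hadm, hTeq⟩ := hTm.eq_addT_minT hr fun x y h => Prod.ext_iff.1 (huniq (x, y) h)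
    refine ⟨(a, b, k), ⟨hadm, hTeq⟩, fun ⟨a', b', k'⟩ ⟨hadm', hTeq'⟩ => ?_⟩
    obtain ⟨ha', hk', hkb', hab'⟩ := hadm'
    obtain ⟨ha, hk, hkb, hab⟩ := hadm
    obtain ⟨rfl, rfl, rfl⟩ := addT_minT_inj antitone_staircase ha' hk'
      (cellOf_staircase.2 ⟨ha', by omega, hab'⟩) ha hk (cellOf_staircase.2 ⟨ha, by omega, hab⟩)
      (hTeq'.symm.trans hTeq)
    rfl

/-- For `n ≥ 2` and `(a,b,k)` with `1 ≤ k ≤ b ≤ n-1-a`, the tableau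
`Add(T⁰_{n-1}; a, b, k)` is a join-irreducible of `M_n`, and every
join-irreducible of `M_n` arises uniquely in this way. -/
theorem stmt4 (n : ℕ) (hn : 2 ≤ n) :
    (∀ a b k : ℕ, 1 ≤ a → 1 ≤ k → k ≤ b → a + b ≤ n - 1 →
      MnJoinIrred n (AddT (staircase n) (minT (staircase n)) a b k)) ∧
    (∀ T : ℕ → ℕ → ℕ, MnJoinIrred n T →
      ∃! x : ℕ × ℕ × ℕ,
        (1 ≤ x.1 ∧ 1 ≤ x.2.2 ∧ x.2.2 ≤ x.2.1 ∧ x.1 + x.2.1 ≤ n - 1) ∧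
        T = AddT (staircase n) (minT (staircase n)) x.1 x.2.1 x.2.2) :=
  stmt4_general n
end

section
/- The number of SSYT of shape δ_{n-1} = (n-2, n-3, ..., 1) with all entries at most n-1 equals 2^{C(n-1,2)}. -/
open Finset Polynomial Matrix
open scoped Nat

section Determinants

variable {R : Type*} [CommRing R]

theorem descPochhammer_eval_add_one_sub (j : ℕ) (x : R) :
    (descPochhammer R (j + 1)).eval (x + 1) - (descPochhammer R (j + 1)).eval x
      = (j + 1) * (descPochhammer R j).eval x := by
  nth_rewrite 1 [descPochhammer_succ_left]
  rw [descPochhammer_succ_right]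
  simp only [eval_mul, eval_X, eval_comp, eval_sub, eval_one, eval_natCast, add_sub_cancel_right]
  ring

theorem mul_sum_Ico_descPochhammer_eval (j : ℕ) {a b : ℕ} (hab : a ≤ b) :
    (j + 1 : R) * ∑ s ∈ Ico a b, (descPochhammer R j).eval (s : R)
      = (descPochhammer R (j + 1)).eval (b : R) - (descPochhammer R (j + 1)).eval (a : R) := by
  rw [mul_sum, ← sum_Ico_sub (f := fun s : ℕ => (descPochhammer R (j + 1)).eval (s : R)) hab]
  refine sum_congr rfl fun s _ => ?_
  rw [Nat.cast_succ, descPochhammer_eval_add_one_sub]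

theorem det_of_sum_eq_sum_det {m : ℕ} {α : Type*} [DecidableEq α] (A : Fin m → Finset α)
    (g : Fin m → α → Fin m → R) :
    (of fun i j => ∑ s ∈ A i, g i s j).det
      = ∑ v ∈ Fintype.piFinset A, (of fun i j => g i (v i) j).det := by
  have hrows : (of fun i j => ∑ s ∈ A i, g i s j) = fun i => ∑ s ∈ A i, g i s := by
    ext i j
    simp [Finset.sum_apply]
  rw [hrows]
  exact (detRowAlternating : (Fin m → R) [⋀^Fin m]→ₗ[R] R).toMultilinearMap.map_sum_finset g A

theorem det_eval_descPochhammer_eq_det_sub {m : ℕ} (x : Fin (m + 1) → R) :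
    (of fun i j : Fin (m + 1) => (descPochhammer R j).eval (x i)).det
      = (of fun i j : Fin m => (descPochhammer R (j + 1)).eval (x i.succ)
          - (descPochhammer R (j + 1)).eval (x i.castSucc)).det := by
  set M : Matrix (Fin (m + 1)) (Fin (m + 1)) R := of fun i j => (descPochhammer R j).eval (x i)
  -- subtract from each row the previous one; column 0 becomes the first unit vector
  set D : Matrix (Fin (m + 1)) (Fin (m + 1)) R :=
    Fin.cases (M 0) (fun i j => M i.succ j - M i.castSucc j)
  have hMD : M.det = D.det :=
    det_eq_of_forall_row_eq_smul_add_pred (fun _ => 1) (fun _ => rfl) fun i j => by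
      simp only [D, Fin.cases_succ]; ring
  rw [hMD, det_succ_column_zero, Fin.sum_univ_succ, sum_eq_zero fun i _ => by
    simp [D, M, descPochhammer_zero]]
  simp [D, M, descPochhammer_zero, submatrix]

theorem det_vandermonde_const_mul {m : ℕ} (c : R) (v : Fin m → R) :
    (vandermonde fun i => c * v i).det = c ^ m.choose 2 * (vandermonde v).det := by
  have hcol : (vandermonde fun i => c * v i)
      = of fun i (j : Fin m) => c ^ (j : ℕ) * vandermonde v i j := by
    ext i j
    simp [vandermonde_apply, mul_pow]
  rw [hcol, det_mul_row, prod_pow_eq_pow_sum, Fin.sum_univ_eq_sum_range (fun j => j),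
    sum_range_id, Nat.choose_two_right]

theorem det_vandermonde_natCast_id (m : ℕ) :
    (vandermonde fun i : Fin m => (i : ℤ)).det = ∏ i ∈ range m, (i ! : ℤ) := by
  cases m with
  | zero => simp
  | succ k =>
    rw [det_vandermonde_id_eq_superFactorial, ← Nat.prod_range_succ_factorial, Nat.cast_prod]

end Determinants

section GelfandTsetlin

/-- The possible rows below `w` of a Gelfand–Tsetlin pattern in strictly increasing coordinates. -/
def interlacing (m : ℕ) (w : Fin (m + 1) → ℕ) : Finset (Fin m → ℕ) :=
  Fintype.piFinset fun i => Ico (w i.castSucc) (w i.succ)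

/-- The number of Gelfand–Tsetlin patterns with top row `w`. -/
def gtCount : (m : ℕ) → (Fin m → ℕ) → ℕ
  | 0, _ => 1
  | m + 1, w => ∑ v ∈ interlacing m w, gtCount m v

variable {m : ℕ} {w : Fin (m + 1) → ℕ} {v : Fin m → ℕ}

theorem mem_interlacing : v ∈ interlacing m w ↔ ∀ i, w i.castSucc ≤ v i ∧ v i < w i.succ := by
  simp [interlacing, Fintype.mem_piFinset]

theorem strictMono_of_mem_interlacing (hw : Monotone w) (hv : v ∈ interlacing m w) :
    StrictMono v := by
  intro i j hij
  rw [mem_interlacing] at hv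
  calc v i < w i.succ := (hv i).2
    _ ≤ w j.castSucc := hw (Fin.succ_le_castSucc_iff.2 hij)
    _ ≤ v j := (hv j).1

theorem gtCount_pos : ∀ {m : ℕ} {w : Fin m → ℕ}, StrictMono w → 0 < gtCount m w
  | 0, _, _ => Nat.one_pos
  | m + 1, w, hw => by
    have hmem : (w ∘ Fin.castSucc) ∈ interlacing m w :=
      mem_interlacing.2 fun i => ⟨le_rfl, hw Fin.castSucc_lt_succ⟩
    exact (gtCount_pos (hw.comp Fin.strictMono_castSucc)).trans_le
      (single_le_sum (fun _ _ => Nat.zero_le _) hmem)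

theorem factorial_mul_sum_det_vandermonde_interlacing (hw : Monotone w) :
    (m ! : ℤ) * ∑ v ∈ interlacing m w, (vandermonde fun i => (v i : ℤ)).det
      = (vandermonde fun i => (w i : ℤ)).det := by
  have hdesc {n : ℕ} (x : Fin n → ℕ) : (vandermonde fun i => (x i : ℤ)).det
      = (of fun i j : Fin n => (descPochhammer ℤ j).eval (x i : ℤ)).det :=
    det_eval_matrixOfPolynomials_eq_det_vandermonde _ _ (descPochhammer_natDegree ℤ ·)
      (monic_descPochhammer ℤ ·)
  have hfact : ((m ! : ℕ) : ℤ) = ∏ j : Fin m, ((j : ℤ) + 1) := by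
    rw [Fin.prod_univ_eq_prod_range (fun j => (j : ℤ) + 1), ← prod_range_add_one_eq_factorial]
    push_cast
    rfl
  calc (m ! : ℤ) * ∑ v ∈ interlacing m w, (vandermonde fun i => (v i : ℤ)).det
      = (∏ j : Fin m, ((j : ℤ) + 1)) * (of fun i j : Fin m =>
          ∑ s ∈ Ico (w i.castSucc) (w i.succ), (descPochhammer ℤ j).eval (s : ℤ)).det := by
        rw [hfact, det_of_sum_eq_sum_det, interlacing]
        simp only [hdesc]
    _ = (of fun i j : Fin m => ((j : ℤ) + 1) *
          ∑ s ∈ Ico (w i.castSucc) (w i.succ), (descPochhammer ℤ j).eval (s : ℤ)).det :=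
        (det_mul_row _ _).symm
    _ = (vandermonde fun i => (w i : ℤ)).det := by
        rw [hdesc, det_eval_descPochhammer_eq_det_sub]
        congr 1
        ext i j
        exact mul_sum_Ico_descPochhammer_eval j (hw (Fin.castSucc_le_succ i))

theorem prod_factorial_mul_gtCount :
    ∀ {m : ℕ} {w : Fin m → ℕ}, Monotone w →
      (∏ i ∈ range m, (i ! : ℤ)) * gtCount m w = (vandermonde fun i => (w i : ℤ)).det
  | 0, _, _ => by simp [gtCount]
  | m + 1, w, hw => by
    rw [← factorial_mul_sum_det_vandermonde_interlacing hw, prod_range_succ, gtCount,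
      Nat.cast_sum, mul_sum, mul_sum]
    refine sum_congr rfl fun v hv => ?_
    rw [← prod_factorial_mul_gtCount (strictMono_of_mem_interlacing hw hv).monotone]
    ring

theorem gtCount_two_mul (m : ℕ) : gtCount m (fun i => 2 * i) = 2 ^ m.choose 2 := by
  have hmono : Monotone fun i : Fin m => 2 * (i : ℕ) := fun i j hij => by simp only; omega
  have key := prod_factorial_mul_gtCount hmono
  push_cast at key
  rw [det_vandermonde_const_mul, det_vandermonde_natCast_id, mul_comm] at key
  exact_mod_cast mul_right_cancel₀ (prod_ne_zero_iff.2 fun i _ => by positivity) key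

end GelfandTsetlin

section Tableaux

variable {lam : ℕ → ℕ} {T : ℕ → ℕ → ℕ}

theorem ExtT_of_pos (T : ℕ → ℕ → ℕ) {a b : ℕ} (ha : 1 ≤ a) (hb : 1 ≤ b) : ExtT T a b = T a b := by
  simp [ExtT, Nat.one_le_iff_ne_zero.1 ha, Nat.one_le_iff_ne_zero.1 hb]

theorem ExtT_zero_left (T : ℕ → ℕ → ℕ) {b : ℕ} (hb : 1 ≤ b) : ExtT T 0 b = 0 := by
  simp [ExtT, Nat.one_le_iff_ne_zero.1 hb]

theorem CellOf.of_le_right {a b b' : ℕ} (hc : CellOf lam a b') (hb : 1 ≤ b) (hbb' : b ≤ b') :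
    CellOf lam a b :=
  ⟨hc.1, hb, hbb'.trans hc.2.2⟩

theorem IsSSYTShape.row_le (h : IsSSYTShape lam T) {a b : ℕ} (hc : CellOf lam a b) (hb : 2 ≤ b) :
    T a (b - 1) ≤ T a b := by
  simpa only [ExtT_of_pos T hc.1 (by omega : 1 ≤ b - 1), ExtT_of_pos T hc.1 hc.2.1] using
    h.2.1 a b hc

theorem IsSSYTShape.col_lt (h : IsSSYTShape lam T) {a b : ℕ} (hc : CellOf lam a b) (ha : 2 ≤ a) :
    T (a - 1) b < T a b := by
  simpa only [ExtT_of_pos T (by omega : 1 ≤ a - 1) hc.2.1, ExtT_of_pos T hc.1 hc.2.1] using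
    h.2.2 a b hc

theorem IsSSYTShape.row_mono (h : IsSSYTShape lam T) {a b b' : ℕ} (hb : 1 ≤ b) (hbb' : b ≤ b')
    (hc : CellOf lam a b') : T a b ≤ T a b' := by
  induction b', hbb' using Nat.le_induction with
  | base => exact le_rfl
  | succ k hk ih =>
    have := h.row_le hc (by omega)
    exact (ih (hc.of_le_right (by omega) k.le_succ)).trans this

theorem IsSSYTShape.le_entry (h : IsSSYTShape lam T) {a b : ℕ} (hc : CellOf lam a b) :
    a ≤ T a b := by
  have hc1 := hc.of_le_right le_rfl hc.2.1
  have hfirst : ExtT T a 0 ≤ ExtT T a 1 := h.2.1 a 1 hc1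
  rw [ExtT_of_pos T hc.1 le_rfl] at hfirst
  exact hfirst.trans (h.row_mono le_rfl hc.2.1 hc)

/-- The boundary conventions `T_{a,0} = a`, `T_{0,b} = 0` of `IsSSYTShape` amount to the
lower bound `a ≤ T a b` on the cells. -/
theorem IsSSYTShape.mk' (hzero : ∀ a b, ¬ CellOf lam a b → T a b = 0)
    (hle : ∀ a b, CellOf lam a b → a ≤ T a b)
    (hrow : ∀ a b, CellOf lam a b → 2 ≤ b → T a (b - 1) ≤ T a b)
    (hcol : ∀ a b, CellOf lam a b → 2 ≤ a → T (a - 1) b < T a b) : IsSSYTShape lam T := by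
  refine ⟨hzero, fun a b hc => ?_, fun a b hc => ?_⟩
  · obtain hb | hb := (show b = 1 ∨ 2 ≤ b by have := hc.2.1; omega)
    · subst hb
      rw [ExtT_of_pos T hc.1 le_rfl]
      exact hle a 1 hc
    · rw [ExtT_of_pos T hc.1 (by omega), ExtT_of_pos T hc.1 hc.2.1]
      exact hrow a b hc hb
  · obtain ha | ha := (show a = 1 ∨ 2 ≤ a by have := hc.1; omega)
    · subst ha
      rw [Nat.sub_self, ExtT_zero_left T hc.2.1, ExtT_of_pos T le_rfl hc.2.1]
      exact hle 1 b hc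
    · rw [ExtT_of_pos T (by omega) hc.2.1, ExtT_of_pos T hc.1 hc.2.1]
      exact hcol a b hc ha

theorem isSSYTShape_congr {lam' : ℕ → ℕ} (h : ∀ a, 1 ≤ a → lam a = lam' a) :
    IsSSYTShape lam T ↔ IsSSYTShape lam' T := by
  have hcell : ∀ a b, CellOf lam a b ↔ CellOf lam' a b := fun a b => by
    unfold CellOf
    constructor <;> rintro ⟨ha, hb, hab⟩ <;> simp_all
  simp only [IsSSYTShape, hcell]

end Tableaux

theorem le_card_filter_Icc_iff {L : ℕ} {P : ℕ → Prop} [DecidablePred P]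
    (hP : ∀ b b', 1 ≤ b → b ≤ b' → b' ≤ L → P b' → P b) {b : ℕ} (hb : 1 ≤ b) (hbL : b ≤ L) :
    b ≤ #{c ∈ Icc 1 L | P c} ↔ P b := by
  constructor
  · intro hcard
    by_contra hPb
    have hsub : {c ∈ Icc 1 L | P c} ⊆ Icc 1 (b - 1) := fun c hc => by
      simp only [mem_filter, mem_Icc] at hc ⊢
      refine ⟨hc.1.1, ?_⟩
      by_contra hcb
      exact hPb (hP b c hb (by omega) hc.1.2 hc.2)
    have := card_le_card hsub
    simp only [Nat.card_Icc] at this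
    omega
  · intro hPb
    have hsub : Icc 1 b ⊆ {c ∈ Icc 1 L | P c} := fun c hc => by
      simp only [mem_filter, mem_Icc] at hc ⊢
      exact ⟨⟨hc.1, by omega⟩, hP c b hc.1 hc.2 hbL hPb⟩
    simpa using card_le_card hsub

section HorizontalStrips

def IsHorizontalStrip (lam mu : ℕ → ℕ) : Prop :=
  ∀ a, 1 ≤ a → lam (a + 1) ≤ mu a ∧ mu a ≤ lam a

def BoundedSSYT (m : ℕ) (lam : ℕ → ℕ) : Set (ℕ → ℕ → ℕ) :=
  {T | IsSSYTShape lam T ∧ ∀ a b, T a b ≤ m}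

/-- The shape of the subtableau of `T` formed by its entries at most `m`. -/
def peelShape (m : ℕ) (lam : ℕ → ℕ) (T : ℕ → ℕ → ℕ) (a : ℕ) : ℕ :=
  #{b ∈ Icc 1 (lam a) | T a b ≤ m}

def peelTableau (m : ℕ) (T : ℕ → ℕ → ℕ) : ℕ → ℕ → ℕ :=
  fun a b => if T a b = m + 1 then 0 else T a b

def fillTableau (m : ℕ) (lam mu : ℕ → ℕ) (T : ℕ → ℕ → ℕ) : ℕ → ℕ → ℕ :=
  fun a b => if CellOf lam a b then (if b ≤ mu a then T a b else m + 1) else 0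

variable {m : ℕ} {lam mu : ℕ → ℕ} {T : ℕ → ℕ → ℕ} {a b : ℕ}

theorem shape_eq_zero_of_mem_boundedSSYT (hT : T ∈ BoundedSSYT m mu) (ha : m < a) : mu a = 0 := by
  by_contra h
  have := hT.1.le_entry (⟨by omega, le_rfl, by omega⟩ : CellOf mu a 1)
  have := hT.2 a 1
  omega

theorem IsSSYTShape.le_iff_le_peelShape (h : IsSSYTShape lam T) (hc : CellOf lam a b) :
    b ≤ peelShape m lam T a ↔ T a b ≤ m :=
  le_card_filter_Icc_iff (fun _ b' hb hbb' hb' hP =>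
    (h.row_mono hb hbb' ⟨hc.1, by omega, hb'⟩).trans hP) hc.2.1 hc.2.2

theorem peelShape_le : peelShape m lam T a ≤ lam a :=
  (card_filter_le _ _).trans (by simp)

theorem isHorizontalStrip_peelShape (hT : T ∈ BoundedSSYT (m + 1) lam)
    (hlam : ∀ a, 1 ≤ a → lam (a + 1) ≤ lam a) : IsHorizontalStrip lam (peelShape m lam T) := by
  refine fun a ha => ⟨?_, peelShape_le⟩
  obtain h0 | hpos := Nat.eq_zero_or_pos (lam (a + 1))
  · simp [h0]
  have hc : CellOf lam (a + 1) (lam (a + 1)) := ⟨by omega, hpos, le_rfl⟩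
  have hlt := hT.1.col_lt hc (by omega)
  have := hT.2 (a + 1) (lam (a + 1))
  rw [Nat.add_sub_cancel] at hlt
  exact (hT.1.le_iff_le_peelShape ⟨ha, hpos, hlam a ha⟩).2 (by omega)

theorem peelShape_eq_zero (hT : T ∈ BoundedSSYT (m + 1) lam) (ha : m < a) :
    peelShape m lam T a = 0 := by
  refine card_eq_zero.2 (filter_eq_empty_iff.2 fun b hb => ?_)
  rw [mem_Icc] at hb
  have := hT.1.le_entry (⟨by omega, hb.1, hb.2⟩ : CellOf lam a b)
  omega

theorem peelTableau_of_le (h : T a b ≤ m) : peelTableau m T a b = T a b :=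
  if_neg (by omega)

theorem peelTableau_mem (hT : T ∈ BoundedSSYT (m + 1) lam) :
    peelTableau m T ∈ BoundedSSYT m (peelShape m lam T) := by
  have hcell : ∀ a b, CellOf (peelShape m lam T) a b →
      CellOf lam a b ∧ T a b ≤ m ∧ peelTableau m T a b = T a b := fun a b hc => by
    have hc' : CellOf lam a b := ⟨hc.1, hc.2.1, hc.2.2.trans peelShape_le⟩
    have hle := (hT.1.le_iff_le_peelShape hc').1 hc.2.2
    exact ⟨hc', hle, peelTableau_of_le hle⟩
  refine ⟨IsSSYTShape.mk' (fun a b hc => ?_) (fun a b hc => ?_) (fun a b hc hb => ?_)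
    (fun a b hc ha => ?_), fun a b => ?_⟩
  · by_cases hc' : CellOf lam a b
    · have := (hT.1.le_iff_le_peelShape (m := m) hc').not.1 fun h => hc ⟨hc'.1, hc'.2.1, h⟩
      have := hT.2 a b
      exact if_pos (by omega)
    · simp [peelTableau, hT.1.1 a b hc']
  · rw [(hcell a b hc).2.2]
    exact hT.1.le_entry (hcell a b hc).1
  · rw [(hcell a b hc).2.2, (hcell a (b - 1) (hc.of_le_right (by omega) (by omega))).2.2]
    exact hT.1.row_le (hcell a b hc).1 hb
  · obtain ⟨hc', hle, heq⟩ := hcell a b hc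
    have hlt := hT.1.col_lt hc' ha
    rwa [heq, peelTableau_of_le (hlt.trans_le hle).le]
  · have := hT.2 a b
    simp only [peelTableau]
    split_ifs <;> omega

theorem fillTableau_of_cell (hc : CellOf lam a b) :
    fillTableau m lam mu T a b = if b ≤ mu a then T a b else m + 1 := by
  simp [fillTableau, hc]

theorem fillTableau_mem (hstrip : IsHorizontalStrip lam mu) (hT : T ∈ BoundedSSYT m mu) :
    fillTableau m lam mu T ∈ BoundedSSYT (m + 1) lam := by
  have hle : ∀ a b, fillTableau m lam mu T a b ≤ m + 1 := fun a b => by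
    have := hT.2 a b
    simp only [fillTableau]
    split_ifs <;> omega
  refine ⟨IsSSYTShape.mk' (fun a b hc => by simp [fillTableau, hc]) (fun a b hc => ?_)
    (fun a b hc hb => ?_) (fun a b hc ha => ?_), hle⟩
  · rw [fillTableau_of_cell hc]
    split_ifs with hb
    · exact hT.1.le_entry ⟨hc.1, hc.2.1, hb⟩
    · -- the rows of `lam` below row `m + 1` lie under empty rows of `mu`
      by_contra ha
      have := (hstrip (a - 1) (by omega)).1
      rw [Nat.sub_add_cancel hc.1, shape_eq_zero_of_mem_boundedSSYT hT (by omega)] at this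
      have := hc.2.2
      omega
  · have hc' : CellOf lam a (b - 1) := hc.of_le_right (by omega) (by omega)
    rw [fillTableau_of_cell hc]
    split_ifs with hmu
    · rw [fillTableau_of_cell hc', if_pos (by omega)]
      exact hT.1.row_le ⟨hc.1, hc.2.1, hmu⟩ hb
    · exact hle a (b - 1)
  · have hstrip' := hstrip (a - 1) (by omega)
    rw [Nat.sub_add_cancel (by omega : 1 ≤ a)] at hstrip'
    have hmu : b ≤ mu (a - 1) := hc.2.2.trans hstrip'.1
    rw [fillTableau_of_cell hc, fillTableau_of_cell ⟨by omega, hc.2.1, hmu.trans hstrip'.2⟩,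
      if_pos hmu]
    split_ifs with hb
    · exact hT.1.col_lt ⟨hc.1, hc.2.1, hb⟩ ha
    · exact Nat.lt_succ_of_le (hT.2 _ _)

theorem fillTableau_peel (hT : T ∈ BoundedSSYT (m + 1) lam) :
    fillTableau m lam (peelShape m lam T) (peelTableau m T) = T := by
  funext a b
  by_cases hc : CellOf lam a b
  · have := hT.2 a b
    rw [fillTableau_of_cell hc]
    split_ifs with hb
    · exact peelTableau_of_le ((hT.1.le_iff_le_peelShape hc).1 hb)
    · have := (hT.1.le_iff_le_peelShape hc).not.1 hb
      omega
  · simp [fillTableau, hc, hT.1.1 a b hc]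

theorem peelShape_fill (hstrip : IsHorizontalStrip lam mu) (hT : T ∈ BoundedSSYT m mu)
    (ha : 1 ≤ a) : peelShape m lam (fillTableau m lam mu T) a = mu a := by
  have hfilter : {b ∈ Icc 1 (lam a) | fillTableau m lam mu T a b ≤ m} = Icc 1 (mu a) := by
    ext b
    simp only [mem_filter, mem_Icc]
    constructor
    · rintro ⟨⟨hb, hbl⟩, hfill⟩
      rw [fillTableau_of_cell ⟨ha, hb, hbl⟩] at hfill
      split_ifs at hfill with hmu
      · exact ⟨hb, hmu⟩
      · omega
    · rintro ⟨hb, hmu⟩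
      have hbl := hmu.trans (hstrip a ha).2
      rw [fillTableau_of_cell ⟨ha, hb, hbl⟩, if_pos hmu]
      exact ⟨⟨hb, hbl⟩, hT.2 a b⟩
  simp [peelShape, hfilter]

theorem peelTableau_fill (hstrip : IsHorizontalStrip lam mu) (hT : T ∈ BoundedSSYT m mu) :
    peelTableau m (fillTableau m lam mu T) = T := by
  funext a b
  have := hT.2 a b
  by_cases hc : CellOf lam a b
  · by_cases hb : b ≤ mu a
    · have hfill : fillTableau m lam mu T a b = T a b := by rw [fillTableau_of_cell hc, if_pos hb]
      rw [peelTableau_of_le (hfill ▸ this), hfill]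
    · simp [peelTableau, fillTableau_of_cell hc, hb, hT.1.1 a b fun hc' => hb hc'.2.2]
  · have hc' : ¬ CellOf mu a b := fun hc' => hc ⟨hc'.1, hc'.2.1, hc'.2.2.trans (hstrip a hc'.1).2⟩
    simp [peelTableau, fillTableau, hc, hT.1.1 a b hc']

end HorizontalStrips

section ShiftedParts

/-- The shape with shifted parts `w`, i.e. with `m` rows of lengths `w i - i`. -/
def shapeOf (m : ℕ) (w : Fin m → ℕ) (a : ℕ) : ℕ :=
  if h : 1 ≤ a ∧ a ≤ m then w ⟨m - a, by omega⟩ - (m - a) else 0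

def shiftedParts (m : ℕ) (mu : ℕ → ℕ) : Fin m → ℕ := fun i => mu (m - i) + i

variable {m : ℕ} {mu : ℕ → ℕ}

theorem val_le_of_strictMono {w : Fin m → ℕ} (hw : StrictMono w) (i : Fin m) : (i : ℕ) ≤ w i := by
  obtain ⟨i, hi⟩ := i
  induction i with
  | zero => exact Nat.zero_le _
  | succ k ih => exact (ih (by omega)).trans_lt (hw (Fin.mk_lt_mk.2 k.lt_succ_self))

theorem shapeOf_sub (w : Fin m → ℕ) (i : Fin m) : shapeOf m w (m - i) = w i - i := by
  have hi := i.2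
  rw [shapeOf, dif_pos (by omega)]
  congr 2
  · ext
    simp only
    omega
  · omega

theorem shapeOf_eq_zero (w : Fin m → ℕ) {a : ℕ} (h : a = 0 ∨ m < a) : shapeOf m w a = 0 := by
  rw [shapeOf, dif_neg (by omega)]

theorem shapeOf_succ_sub_castSucc (w : Fin (m + 1) → ℕ) (i : Fin m) :
    shapeOf (m + 1) w (m - i + 1) = w i.castSucc - i := by
  rw [show m - i + 1 = m + 1 - (i.castSucc : ℕ) by simp only [Fin.val_castSucc]; omega, shapeOf_sub]
  rfl

theorem shapeOf_succ_sub_succ (w : Fin (m + 1) → ℕ) (i : Fin m) :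
    shapeOf (m + 1) w (m - i) = w i.succ - (i + 1) := by
  rw [show m - i = m + 1 - (i.succ : ℕ) by simp, shapeOf_sub]
  rfl

theorem exists_eq_sub_val {a : ℕ} (h1 : 1 ≤ a) (h2 : a ≤ m) : ∃ i : Fin m, a = m - i :=
  ⟨⟨m - a, by omega⟩, by simp only; omega⟩

theorem shapeOf_antitone {w : Fin m → ℕ} (hw : StrictMono w) {a : ℕ} (ha : 1 ≤ a) :
    shapeOf m w (a + 1) ≤ shapeOf m w a := by
  by_cases ham : a + 1 ≤ m
  · obtain ⟨i, rfl⟩ := exists_eq_sub_val ha (by omega : a ≤ m)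
    have hj : m - i + 1 = m - (⟨i - 1, by omega⟩ : Fin m) := by simp only; omega
    rw [hj, shapeOf_sub, shapeOf_sub]
    have := hw (show (⟨i - 1, by omega⟩ : Fin m) < i from Fin.lt_def.2 (by simp only; omega))
    simp only at this ⊢
    omega
  · rw [shapeOf_eq_zero w (Or.inr (by omega))]
    exact Nat.zero_le _

theorem isHorizontalStrip_shapeOf {w : Fin (m + 1) → ℕ} {v : Fin m → ℕ}
    (hv : v ∈ interlacing m w) : IsHorizontalStrip (shapeOf (m + 1) w) (shapeOf m v) := by
  intro a ha
  by_cases ham : a ≤ m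
  · obtain ⟨i, rfl⟩ := exists_eq_sub_val ha ham
    have := mem_interlacing.1 hv i
    rw [shapeOf_succ_sub_castSucc, shapeOf_succ_sub_succ, shapeOf_sub]
    omega
  · rw [shapeOf_eq_zero v (Or.inr (by omega)), shapeOf_eq_zero w (Or.inr (by omega))]
    exact ⟨le_rfl, Nat.zero_le _⟩

theorem shiftedParts_mem_interlacing {w : Fin (m + 1) → ℕ} (hw : StrictMono w)
    (h : IsHorizontalStrip (shapeOf (m + 1) w) mu) : shiftedParts m mu ∈ interlacing m w := by
  refine mem_interlacing.2 fun i => ?_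
  have := h (m - i) (by omega)
  rw [shapeOf_succ_sub_castSucc, shapeOf_succ_sub_succ] at this
  have := val_le_of_strictMono hw i.succ
  simp only [shiftedParts, Fin.val_succ] at this ⊢
  omega

theorem shapeOf_shiftedParts (h0 : mu 0 = 0) (h : ∀ a, m < a → mu a = 0) :
    shapeOf m (shiftedParts m mu) = mu := by
  funext a
  by_cases ha : 1 ≤ a ∧ a ≤ m
  · obtain ⟨i, rfl⟩ := exists_eq_sub_val ha.1 ha.2
    rw [shapeOf_sub, shiftedParts, Nat.add_sub_cancel]
  · rw [shapeOf_eq_zero _ (by omega)]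
    obtain ha | ha : a = 0 ∨ m < a := by omega
    · rw [ha, h0]
    · rw [h a ha]

theorem shiftedParts_shapeOf {v : Fin m → ℕ} (hv : StrictMono v) :
    shiftedParts m (shapeOf m v) = v := by
  funext i
  rw [shiftedParts, shapeOf_sub, Nat.sub_add_cancel (val_le_of_strictMono hv i)]

end ShiftedParts

section Counting

variable {m : ℕ} {w : Fin (m + 1) → ℕ}

theorem peelShape_shapeOf_zero {T : ℕ → ℕ → ℕ} :
    peelShape m (shapeOf (m + 1) w) T 0 = 0 := by
  simp [peelShape, shapeOf_eq_zero w (Or.inl rfl)]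

theorem shapeOf_shiftedParts_peelShape {T : ℕ → ℕ → ℕ}
    (hT : T ∈ BoundedSSYT (m + 1) (shapeOf (m + 1) w)) :
    shapeOf m (shiftedParts m (peelShape m (shapeOf (m + 1) w) T))
      = peelShape m (shapeOf (m + 1) w) T :=
  shapeOf_shiftedParts peelShape_shapeOf_zero fun _ ha => peelShape_eq_zero hT ha

def peelEquiv (hw : StrictMono w) :
    BoundedSSYT (m + 1) (shapeOf (m + 1) w)
      ≃ Σ v : interlacing m w, BoundedSSYT m (shapeOf m v) where
  toFun T :=
    ⟨⟨_, shiftedParts_mem_interlacing hw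
        (isHorizontalStrip_peelShape T.2 fun _ ha => shapeOf_antitone hw ha)⟩,
      ⟨peelTableau m T.1, by rw [shapeOf_shiftedParts_peelShape T.2]; exact peelTableau_mem T.2⟩⟩
  invFun p := ⟨_, fillTableau_mem (isHorizontalStrip_shapeOf p.1.2) p.2.2⟩
  left_inv T := by
    apply Subtype.ext
    simp only
    rw [shapeOf_shiftedParts_peelShape T.2, fillTableau_peel T.2]
  right_inv p := by
    obtain ⟨⟨v, hv⟩, ⟨T, hT⟩⟩ := p
    have hstrip := isHorizontalStrip_shapeOf hv
    have hshape :
        peelShape m (shapeOf (m + 1) w) (fillTableau m (shapeOf (m + 1) w) (shapeOf m v) T)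
          = shapeOf m v := by
      funext a
      obtain rfl | ha := Nat.eq_zero_or_pos a
      · rw [peelShape_shapeOf_zero, shapeOf_eq_zero v (Or.inl rfl)]
      · exact peelShape_fill hstrip hT ha
    refine Sigma.subtype_ext (Subtype.ext ?_) (peelTableau_fill hstrip hT)
    simp only
    rw [hshape, shiftedParts_shapeOf (strictMono_of_mem_interlacing hw.monotone hv)]

theorem boundedSSYT_zero_shapeOf (w : Fin 0 → ℕ) :
    BoundedSSYT 0 (shapeOf 0 w) = {fun _ _ => 0} := by
  have hno : ∀ a b, ¬ CellOf (shapeOf 0 w) a b := fun a b hc => by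
    have := hc.2.2
    rw [shapeOf_eq_zero w (by omega)] at this
    exact absurd hc.2.1 (by omega)
  ext T
  refine ⟨fun hT => funext₂ fun a b => Nat.le_zero.1 (hT.2 a b), ?_⟩
  rintro rfl
  exact ⟨IsSSYTShape.mk' (fun _ _ _ => rfl) (fun a b hc => (hno a b hc).elim)
    (fun a b hc => (hno a b hc).elim) (fun a b hc => (hno a b hc).elim), fun _ _ => le_rfl⟩

theorem card_boundedSSYT_shapeOf :
    ∀ {m : ℕ} {w : Fin m → ℕ}, StrictMono w → Nat.card (BoundedSSYT m (shapeOf m w)) = gtCount m w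
  | 0, w, _ => by rw [boundedSSYT_zero_shapeOf, Nat.card_unique]; rfl
  | m + 1, w, hw => by
    have hcard (v : interlacing m w) : Nat.card (BoundedSSYT m (shapeOf m v)) = gtCount m v :=
      card_boundedSSYT_shapeOf (strictMono_of_mem_interlacing hw.monotone v.2)
    have (v : interlacing m w) : Finite (BoundedSSYT m (shapeOf m v)) :=
      Nat.finite_of_card_ne_zero <| by
        rw [hcard]
        exact (gtCount_pos (strictMono_of_mem_interlacing hw.monotone v.2)).ne'
    rw [Nat.card_congr (peelEquiv hw), Nat.card_sigma, gtCount, ← sum_coe_sort (interlacing m w)]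
    exact Fintype.sum_congr _ _ hcard

end Counting

theorem staircase_eq_shapeOf (n : ℕ) {a : ℕ} (ha : 1 ≤ a) :
    staircase n a = shapeOf (n - 1) (fun i => 2 * i) a := by
  by_cases han : a ≤ n - 1
  · obtain ⟨i, rfl⟩ := exists_eq_sub_val ha han
    rw [shapeOf_sub, staircase]
    omega
  · rw [shapeOf_eq_zero _ (Or.inr (by omega)), staircase]
    omega

theorem stmt10_general (n : ℕ) :
    {T : ℕ → ℕ → ℕ | MnMem n T}.ncard = 2 ^ Nat.choose (n - 1) 2 := by
  have hw : StrictMono fun i : Fin (n - 1) => 2 * (i : ℕ) := fun i j hij => by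
    simp only [Fin.lt_def] at hij ⊢
    omega
  have hset : {T | MnMem n T} = BoundedSSYT (n - 1) (shapeOf (n - 1) fun i => 2 * i) :=
    Set.ext fun T => and_congr_left' (isSSYTShape_congr fun _ ha => staircase_eq_shapeOf n ha)
  rw [hset, ← Nat.card_coe_set_eq, card_boundedSSYT_shapeOf hw, gtCount_two_mul]

/-- For `n ≥ 2`, the number of SSYT of shape `δ_{n-1} = (n-2,…,1)` with all
entries at most `n-1` equals `2^(C(n-1,2))`. -/
theorem stmt10 (n : ℕ) (hn : 2 ≤ n) :
    {T : ℕ → ℕ → ℕ | MnMem n T}.ncard = 2 ^ Nat.choose (n - 1) 2 :=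
  stmt10_general n
end

section
/- Let T be an SSYT of shape λ with minimal SSYT T⁰ (having (a,b)-entry a). Then T has exactly one reducible entry, located at (a₀,b₀), if and only if T = Add(T⁰; a₀, b₀, k) for some k ≥ 1. -/
/-!
Everything is read off the tableau extended by its boundary conventions, `ExtT T`.
If `(a₀, b₀)` is the only reducible cell, induction on `a + b` gives
`ExtT T a b = a + k · [a₀ ≤ a ∧ b₀ ≤ b]` with `k = T a₀ b₀ - a₀`: a cell other than
`(a₀, b₀)` is not reducible, so its entry equals its left neighbour or exceeds its upper
neighbour by exactly one, and together with the semistandard inequalities this leaves only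
the value predicted by the neighbours. Conversely, for this profile a cell is reducible
exactly when it is the corner `(a₀, b₀)` of the quadrant and `k ≥ 1`.
-/

def ExtCell (lam : ℕ → ℕ) (a b : ℕ) : Prop := a = 0 ∨ b = 0 ∨ CellOf lam a b

/-- The entry of `Add(T⁰; a₀, b₀, k)` at a cell `(a, b)`; for `a₀, b₀ ≥ 1` it also obeys the
boundary conventions of `ExtT`. -/
def addMinEntry (a₀ b₀ k a b : ℕ) : ℕ := a + if a₀ ≤ a ∧ b₀ ≤ b then k else 0

lemma CellOf.extCell_left {lam : ℕ → ℕ} {a b : ℕ} (hc : CellOf lam a b) :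
    ExtCell lam a (b - 1) := by
  obtain ⟨ha, hb1, hb⟩ := hc
  by_cases h : b = 1
  · exact .inr (.inl (by omega))
  · exact .inr (.inr ⟨ha, by omega, by omega⟩)

lemma CellOf.extCell_up {lam : ℕ → ℕ} (hlam : ∀ a, lam (a + 1) ≤ lam a) {a b : ℕ}
    (hc : CellOf lam a b) : ExtCell lam (a - 1) b := by
  obtain ⟨ha, hb1, hb⟩ := hc
  by_cases h : a = 1
  · exact .inl (by omega)
  · have := hlam (a - 1)
    exact .inr (.inr ⟨by omega, hb1, by rw [Nat.sub_add_cancel ha] at this; omega⟩)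

lemma extT_of_cellOf {lam : ℕ → ℕ} {T : ℕ → ℕ → ℕ} {a b : ℕ} (hc : CellOf lam a b) :
    ExtT T a b = T a b := by
  obtain ⟨ha, hb, -⟩ := hc
  rw [ExtT, if_neg (by omega), if_neg (by omega)]

lemma extT_eq_addMinEntry_of_boundary (T : ℕ → ℕ → ℕ) {a₀ b₀ k a b : ℕ}
    (ha₀ : 1 ≤ a₀) (hb₀ : 1 ≤ b₀) (h : a = 0 ∨ b = 0) :
    ExtT T a b = addMinEntry a₀ b₀ k a b := by
  unfold ExtT addMinEntry
  split_ifs <;> omega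

lemma addT_minT_of_cellOf {lam : ℕ → ℕ} {a₀ b₀ k a b : ℕ} (hc : CellOf lam a b) :
    AddT lam (minT lam) a₀ b₀ k a b = addMinEntry a₀ b₀ k a b := by
  by_cases h : a₀ ≤ a ∧ b₀ ≤ b <;> simp [AddT, minT, addMinEntry, hc, h]

lemma eq_addT_minT_iff {lam : ℕ → ℕ} {T : ℕ → ℕ → ℕ}
    (hT0 : ∀ a b, ¬ CellOf lam a b → T a b = 0) {a₀ b₀ k : ℕ} (ha₀ : 1 ≤ a₀) (hb₀ : 1 ≤ b₀) :
    T = AddT lam (minT lam) a₀ b₀ k ↔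
      ∀ a b, ExtCell lam a b → ExtT T a b = addMinEntry a₀ b₀ k a b := by
  constructor
  · rintro rfl a b (rfl | rfl | hc)
    · exact extT_eq_addMinEntry_of_boundary _ ha₀ hb₀ (.inl rfl)
    · exact extT_eq_addMinEntry_of_boundary _ ha₀ hb₀ (.inr rfl)
    · rw [extT_of_cellOf hc, addT_minT_of_cellOf hc]
  · intro h
    funext a b
    by_cases hc : CellOf lam a b
    · rw [addT_minT_of_cellOf hc, ← h a b (.inr (.inr hc)), extT_of_cellOf hc]
    · simp [AddT, minT, hc, hT0 a b hc]

theorem extT_eq_addMinEntry_of_unique_reducible {lam : ℕ → ℕ}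
    (hlam : ∀ a, lam (a + 1) ≤ lam a) {T : ℕ → ℕ → ℕ} (hT : IsSSYTShape lam T)
    {a₀ b₀ : ℕ} (hc : CellOf lam a₀ b₀)
    (huniq : ∀ a b, CellOf lam a b → Reducible T a b → a = a₀ ∧ b = b₀) :
    ∀ a b, ExtCell lam a b → ExtT T a b = addMinEntry a₀ b₀ (T a₀ b₀ - a₀) a b := by
  intro a b hab
  induction hn : a + b using Nat.strong_induction_on generalizing a b with
  | _ n ih =>
    rcases hab with rfl | rfl | hcell
    · exact extT_eq_addMinEntry_of_boundary _ hc.1 hc.2.1 (.inl rfl)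
    · exact extT_eq_addMinEntry_of_boundary _ hc.1 hc.2.1 (.inr rfl)
    obtain ⟨ha, hb, -⟩ := id hcell
    have hleft := ih (a + (b - 1)) (by omega) a (b - 1) hcell.extCell_left rfl
    have hup := ih (a - 1 + b) (by omega) (a - 1) b (hcell.extCell_up hlam) rfl
    have hrow := hT.2.1 a b hcell
    have hcol := hT.2.2 a b hcell
    rw [extT_of_cellOf hcell] at hrow hcol ⊢
    by_cases hcorner : a = a₀ ∧ b = b₀
    · obtain ⟨rfl, rfl⟩ := hcorner
      simp only [addMinEntry] at hleft ⊢
      split_ifs at hleft ⊢ <;> omega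
    · have hnred : ¬ Reducible T a b := fun h => hcorner (huniq a b hcell h)
      rw [Reducible, extT_of_cellOf hcell] at hnred
      simp only [addMinEntry] at hleft hup ⊢
      split_ifs at hleft hup ⊢ <;> omega

theorem reducible_iff_of_extT_eq_addMinEntry {lam : ℕ → ℕ}
    (hlam : ∀ a, lam (a + 1) ≤ lam a) {T : ℕ → ℕ → ℕ} {a₀ b₀ k : ℕ}
    (hT : ∀ a b, ExtCell lam a b → ExtT T a b = addMinEntry a₀ b₀ k a b)
    {a b : ℕ} (hc : CellOf lam a b) :
    Reducible T a b ↔ 1 ≤ k ∧ a = a₀ ∧ b = b₀ := by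
  rw [Reducible, hT a b (.inr (.inr hc)), hT _ _ hc.extCell_left, hT _ _ (hc.extCell_up hlam)]
  obtain ⟨ha, hb, -⟩ := hc
  simp only [addMinEntry]
  split_ifs <;> omega

/-- Let `T` be an SSYT of (weakly decreasing) shape `lam` and `(a₀,b₀)` a cell
of `lam`. Then `T` has exactly one reducible entry, located at `(a₀,b₀)`, iff
`T = Add(T⁰; a₀, b₀, k)` for some `k ≥ 1`, where `T⁰` is the minimal SSYT of
shape `lam` (with `(a,b)`-entry `a`). -/
theorem stmt14 (lam : ℕ → ℕ) (hlam : ∀ a, lam (a + 1) ≤ lam a)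
    (T : ℕ → ℕ → ℕ) (hT : IsSSYTShape lam T) (a₀ b₀ : ℕ) (hc : CellOf lam a₀ b₀) :
    (Reducible T a₀ b₀ ∧
      ∀ a b, CellOf lam a b → Reducible T a b → a = a₀ ∧ b = b₀) ↔
    ∃ k : ℕ, 1 ≤ k ∧ T = AddT lam (minT lam) a₀ b₀ k := by
  constructor
  · rintro ⟨hred, huniq⟩
    have hprofile := extT_eq_addMinEntry_of_unique_reducible hlam hT hc huniq
    refine ⟨_, ((reducible_iff_of_extT_eq_addMinEntry hlam hprofile hc).1 hred).1, ?_⟩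
    exact (eq_addT_minT_iff hT.1 hc.1 hc.2.1).2 hprofile
  · rintro ⟨k, hk, hTk⟩
    have hprofile := (eq_addT_minT_iff hT.1 hc.1 hc.2.1).1 hTk
    exact ⟨(reducible_iff_of_extT_eq_addMinEntry hlam hprofile hc).2 ⟨hk, rfl, rfl⟩,
      fun a b hab hred => ((reducible_iff_of_extT_eq_addMinEntry hlam hprofile hab).1 hred).2⟩
end

section
/- For any T in M_n and any column index 1 ≤ b ≤ n-2, the number of reducible entries in column b of T is at most min(b, n-1-b); hence the total number of reducible entries of T is at most Σ_{b=1}^{n-2} min(b, n-1-b). -/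
/-!
Walking down column `b` from the convention `T_{0,b} = 0`, every step increases the entry by at
least `1`, and the step into a reducible entry by at least `2`. The bottom cell of the column is in
row `n-1-b` and holds at most `n-1`, so the column has at most `(n-1) - (n-1-b) = b` reducible
entries; trivially it has at most `n-1-b`. Summing over the columns bounds the total.
-/

open Finset

lemma add_add_card_steps_ge_two_le {f : ℕ → ℕ} {t : ℕ}
    (hf : ∀ x ∈ Ioc 0 t, f (x - 1) < f x) :
    f 0 + t + #{x ∈ Ioc 0 t | f (x - 1) + 2 ≤ f x} ≤ f t := by
  induction t with
  | zero => simp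
  | succ t ih =>
    have hstep := hf (t + 1) (by simp)
    have ih := ih fun x hx => hf x (Ioc_subset_Ioc_right t.le_succ hx)
    rw [← insert_Ioc_right_eq_Ioc_add_one t.zero_le, filter_insert]
    simp only [add_tsub_cancel_right] at hstep ⊢
    split_ifs with hbig
    · rw [card_insert_of_notMem (by simp)]
      omega
    · omega

lemma ncard_eq_sum_ncard_fibers_snd {α β : Type*} {S : Set (α × β)} (hS : S.Finite)
    {B : Finset β} (hB : ∀ p ∈ S, p.2 ∈ B) : S.ncard = ∑ b ∈ B, {a | (a, b) ∈ S}.ncard := by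
  classical
  rw [Set.ncard_eq_toFinset_card S hS, card_eq_sum_card_fiberwise (f := Prod.snd)
    (fun p hp => hB p (by simpa using hp))]
  refine sum_congr rfl fun b _ => ?_
  rw [← Set.ncard_coe_finset,
    ← Set.ncard_image_of_injective {a | (a, b) ∈ S} (Prod.mk_left_injective b)]
  congr 1
  ext ⟨a, b'⟩
  simp only [coe_filter, Set.Finite.mem_toFinset, Set.mem_image, Set.mem_ofPred_eq, Prod.mk.injEq]
  constructor
  · rintro ⟨h, rfl⟩
    exact ⟨a, h, rfl, rfl⟩
  · rintro ⟨a, h, rfl, rfl⟩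
    exact ⟨h, rfl⟩

instance (T : ℕ → ℕ → ℕ) (a b : ℕ) : Decidable (Reducible T a b) :=
  inferInstanceAs (Decidable (_ ∧ _))

lemma cellOf_staircase_iff {n a b : ℕ} (hb : 1 ≤ b) :
    CellOf (staircase n) a b ↔ a ∈ Ioc 0 (n - 1 - b) := by
  simp only [CellOf, staircase, mem_Ioc]
  omega

lemma ncard_reducible_column_le {n b : ℕ} {T : ℕ → ℕ → ℕ} (hT : MnMem n T)
    (hb : 1 ≤ b) :
    {a | CellOf (staircase n) a b ∧ Reducible T a b}.ncard ≤ min b (n - 1 - b) := by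
  set c := n - 1 - b
  have hcol : {a | CellOf (staircase n) a b ∧ Reducible T a b} =
      ↑{a ∈ Ioc 0 c | Reducible T a b} := by
    ext a
    simp [cellOf_staircase_iff hb, c]
  rw [hcol, Set.ncard_coe_finset]
  refine le_min ?_ ((card_filter_le _ _).trans (by simp))
  set f := fun x => ExtT T x b
  have hsteps : ∀ x ∈ Ioc 0 c, f (x - 1) < f x := fun x hx =>
    hT.1.2.2 x b ((cellOf_staircase_iff hb).2 hx)
  have hf0 : f 0 = 0 := by simp [f, ExtT]
  have hfc : f c ≤ n - 1 := by
    simp only [f, ExtT]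
    split_ifs <;> first | omega | exact hT.2 c b
  have hbig : #{a ∈ Ioc 0 c | Reducible T a b} ≤ #{x ∈ Ioc 0 c | f (x - 1) + 2 ≤ f x} :=
    card_le_card (monotone_filter_right _ fun _ _ => And.right)
  have hcount := add_add_card_steps_ge_two_le hsteps
  omega

/-- For `T ∈ M_n` the number of reducible entries in column `b` is at most
`min(b, n-1-b)`, and hence the total number of reducible entries of `T` is at
most `Σ_{b=1}^{n-2} min(b, n-1-b)`. -/
theorem stmt15 (n : ℕ) (T : ℕ → ℕ → ℕ) (hT : MnMem n T) :
    (∀ b, 1 ≤ b → b ≤ n - 2 →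
      {a : ℕ | CellOf (staircase n) a b ∧ Reducible T a b}.ncard ≤
        min b (n - 1 - b)) ∧
    {p : ℕ × ℕ | CellOf (staircase n) p.1 p.2 ∧ Reducible T p.1 p.2}.ncard ≤
      ∑ b ∈ Finset.Icc 1 (n - 2), min b (n - 1 - b) := by
  refine ⟨fun b hb _ => ncard_reducible_column_le hT hb, ?_⟩
  have hcells : {p : ℕ × ℕ | CellOf (staircase n) p.1 p.2 ∧ Reducible T p.1 p.2} ⊆
      ↑(Icc 1 (n - 2) ×ˢ Icc 1 (n - 2)) := by
    rintro ⟨a, b⟩ ⟨⟨ha, hb, hab⟩, -⟩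
    simp only [staircase] at hab
    simp only [coe_product, coe_Icc, Set.mem_prod, Set.mem_Icc]
    omega
  rw [ncard_eq_sum_ncard_fibers_snd ((finite_toSet _).subset hcells)
    fun p hp => (mem_product.1 (hcells hp)).2]
  exact sum_le_sum fun b hb => ncard_reducible_column_le hT (mem_Icc.1 hb).1
end

section
/- The maximum size of an antichain of the poset P_n = {(i,j,k) ∈ [n]³ : i+j < n+1 < j+k} (componentwise order) is m(m-1) if n = 2m and m² if n = 2m+1. -/
open Finset

theorem IsAntichain.injOn_of_comparable {α β : Type*} [Preorder α] {s : Set α}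
    (hs : IsAntichain (· ≤ ·) s) {f : α → β}
    (hf : ∀ a ∈ s, ∀ b ∈ s, f a = f b → a ≤ b ∨ b ≤ a) : s.InjOn f := by
  intro a ha b hb hab
  rcases hf a ha b hb hab with h | h
  exacts [hs.eq ha hb h, hs.eq' ha hb h]

theorem Nat.sum_range_min_sub_add_one (N : ℕ) :
    ∑ t ∈ range N, min (N - t) (t + 1) = (N + 2) / 2 * ((N + 1) / 2) := by
  induction N using Nat.twoStepInduction with
  | zero | one => rfl
  | more N ih _ =>
    have hshift : ∑ t ∈ range N, min (N + 2 - (t + 1)) (t + 1 + 1) =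
        ∑ t ∈ range N, (min (N - t) (t + 1) + 1) :=
      sum_congr rfl fun t ht => by have := mem_range.mp ht; omega
    rw [sum_range_succ', sum_range_succ, hshift, sum_add_distrib, ih, sum_const, card_range,
      smul_eq_mul, mul_one, show (N + 2 + 2) / 2 = (N + 2) / 2 + 1 by omega,
      show (N + 2 + 1) / 2 = (N + 1) / 2 + 1 by omega, Nat.add_one_mul, Nat.mul_add_one]
    omega

theorem Nat.sum_Ico_two_min_sub_sub_one (n : ℕ) :
    ∑ j ∈ Ico 2 n, min (n - j) (j - 1) = n / 2 * ((n - 1) / 2) := by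
  rcases lt_or_ge n 2 with hn | hn
  · interval_cases n <;> rfl
  obtain ⟨N, rfl⟩ : ∃ N, n = N + 2 := ⟨n - 2, by omega⟩
  rw [sum_Ico_eq_sum_range, Nat.add_sub_cancel, show N + 2 - 1 = N + 1 by omega,
    ← Nat.sum_range_min_sub_add_one]
  exact sum_congr rfl fun t _ => by omega

def PnFinset (n : ℕ) : Finset (ℕ × ℕ × ℕ) :=
  {p ∈ Icc 1 n ×ˢ Icc 1 n ×ˢ Icc 1 n | p.1 + p.2.1 < n + 1 ∧ n + 1 < p.2.1 + p.2.2}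

theorem coe_PnFinset (n : ℕ) : (PnFinset n : Set (ℕ × ℕ × ℕ)) = PnSet n := by
  ext p
  simp [PnFinset, PnSet, and_assoc]

theorem mem_PnFinset {n : ℕ} {p : ℕ × ℕ × ℕ} :
    p ∈ PnFinset n ↔ (1 ≤ p.1 ∧ p.1 ≤ n) ∧ (1 ≤ p.2.1 ∧ p.2.1 ≤ n) ∧ (1 ≤ p.2.2 ∧ p.2.2 ≤ n) ∧
      p.1 + p.2.1 < n + 1 ∧ n + 1 < p.2.1 + p.2.2 := by
  rw [← mem_coe, coe_PnFinset]; rfl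

theorem card_eq_sum_card_filter_snd_fst {n : ℕ} {s : Finset (ℕ × ℕ × ℕ)} (hs : s ⊆ PnFinset n) :
    #s = ∑ j ∈ Ico 2 n, #{p ∈ s | p.2.1 = j} :=
  card_eq_sum_card_fiberwise fun p hp => by
    have := mem_PnFinset.mp (hs hp)
    simp only [coe_Ico, Set.mem_Ico]
    omega

theorem card_le_of_isAntichain_of_forall_snd_fst_eq {n j : ℕ} {t : Finset (ℕ × ℕ × ℕ)}
    (ht : t ⊆ PnFinset n) (hj : ∀ p ∈ t, p.2.1 = j)
    (hanti : IsAntichain (· ≤ ·) (t : Set (ℕ × ℕ × ℕ))) :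
    #t ≤ min (n - j) (j - 1) := by
  have hfst : (t : Set (ℕ × ℕ × ℕ)).InjOn Prod.fst :=
    hanti.injOn_of_comparable fun p hp q hq _ => by
      have := hj p hp; have := hj q hq
      simp only [Prod.le_def]; omega
  have hthd : (t : Set (ℕ × ℕ × ℕ)).InjOn (·.2.2) :=
    hanti.injOn_of_comparable fun p hp q hq (_ : p.2.2 = q.2.2) => by
      have := hj p hp; have := hj q hq
      simp only [Prod.le_def]; omega
  refine le_min ?_ ?_
  · calc #t ≤ #(Icc 1 (n - j)) :=
          card_le_card_of_injOn _ (fun p hp => mem_Icc.mpr <| by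
            have := mem_PnFinset.mp (ht hp); have := hj p hp; omega) hfst
      _ = n - j := by simp
  · calc #t ≤ #(Icc (n + 2 - j) n) :=
          card_le_card_of_injOn _ (fun p hp => mem_Icc.mpr <| by
            have := mem_PnFinset.mp (ht hp); have := hj p hp; omega) hthd
      _ ≤ j - 1 := by rw [Nat.card_Icc]; omega

theorem card_le_of_isAntichain {n : ℕ} {s : Finset (ℕ × ℕ × ℕ)} (hs : s ⊆ PnFinset n)
    (hanti : IsAntichain (· ≤ ·) (s : Set (ℕ × ℕ × ℕ))) : #s ≤ n / 2 * ((n - 1) / 2) := by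
  rw [card_eq_sum_card_filter_snd_fst hs, ← Nat.sum_Ico_two_min_sub_sub_one]
  exact sum_le_sum fun j _ =>
    card_le_of_isAntichain_of_forall_snd_fst_eq ((filter_subset _ _).trans hs)
      (fun p hp => (mem_filter.mp hp).2) (hanti.subset (coe_subset.mpr (filter_subset _ _)))

/-- The weight `i + 2j + k` is strictly monotone, and at the level `2n + 2` the fibre over `j` is
`{(i, j, 2n + 2 - 2j - i) | max 1 (n + 2 - 2j) ≤ i ≤ n - j}`. -/
def PnSlice (n : ℕ) : Finset (ℕ × ℕ × ℕ) :=
  {p ∈ PnFinset n | p.1 + 2 * p.2.1 + p.2.2 = 2 * n + 2}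

theorem PnSlice_subset_PnFinset (n : ℕ) : PnSlice n ⊆ PnFinset n := filter_subset _ _

theorem isAntichain_PnSlice (n : ℕ) : IsAntichain (· ≤ ·) (PnSlice n : Set (ℕ × ℕ × ℕ)) := by
  refine IsAntichain.of_strictMonoOn_antitoneOn
    (f := fun p : ℕ × ℕ × ℕ => p.1 + 2 * p.2.1 + p.2.2) ?_ ?_
  · intro p _ q _ hpq
    simp only [Prod.lt_iff, Prod.le_def] at hpq
    dsimp only
    omega
  · intro p hp q hq _
    simp only [PnSlice, coe_filter, Set.mem_ofPred_eq] at hp hq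
    dsimp only
    omega

theorem card_filter_snd_fst_PnSlice (n j : ℕ) :
    #{p ∈ PnSlice n | p.2.1 = j} = min (n - j) (j - 1) := by
  calc #{p ∈ PnSlice n | p.2.1 = j} = #(Icc (max 1 (n + 2 - 2 * j)) (n - j)) := by
        refine card_nbij' Prod.fst (fun i => (i, j, 2 * n + 2 - 2 * j - i)) ?_ ?_ ?_ ?_ <;>
          intro x hx <;>
          simp only [PnSlice, coe_filter, mem_filter, mem_PnFinset, Set.mem_ofPred_eq, coe_Icc,
            Set.mem_Icc, sup_le_iff, Prod.ext_iff, and_true, true_and] at hx ⊢ <;>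
          omega
    _ = min (n - j) (j - 1) := by rw [Nat.card_Icc]; omega

theorem card_PnSlice (n : ℕ) : #(PnSlice n) = n / 2 * ((n - 1) / 2) := by
  rw [card_eq_sum_card_filter_snd_fst (PnSlice_subset_PnFinset n),
    ← Nat.sum_Ico_two_min_sub_sub_one]
  exact sum_congr rfl fun j _ => card_filter_snd_fst_PnSlice n j

theorem isGreatest_ncard_antichain_PnSet (n : ℕ) :
    IsGreatest {s | ∃ A : Set (ℕ × ℕ × ℕ), A ⊆ PnSet n ∧ IsAntichain (· ≤ ·) A ∧ A.ncard = s}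
      (n / 2 * ((n - 1) / 2)) := by
  refine ⟨⟨PnSlice n, ?_, isAntichain_PnSlice n, by rw [Set.ncard_coe_finset, card_PnSlice]⟩, ?_⟩
  · rw [← coe_PnFinset]
    exact coe_subset.mpr (PnSlice_subset_PnFinset n)
  · rintro _ ⟨A, hA, hanti, rfl⟩
    rw [← coe_PnFinset] at hA
    lift A to Finset (ℕ × ℕ × ℕ) using (PnFinset n).finite_toSet.subset hA
    rw [Set.ncard_coe_finset]
    exact card_le_of_isAntichain (coe_subset.mp hA) hanti

theorem stmt17_general (n m : ℕ) :
    (n = 2 * m → IsGreatest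
      {s | ∃ A : Set (ℕ × ℕ × ℕ),
        A ⊆ PnSet n ∧ IsAntichain (· ≤ ·) A ∧ A.ncard = s} (m * (m - 1))) ∧
    (n = 2 * m + 1 → IsGreatest
      {s | ∃ A : Set (ℕ × ℕ × ℕ),
        A ⊆ PnSet n ∧ IsAntichain (· ≤ ·) A ∧ A.ncard = s} (m ^ 2)) := by
  refine ⟨fun hn => ?_, fun hn => ?_⟩ <;> convert isGreatest_ncard_antichain_PnSet n using 1
  · rw [hn]; congr 1 <;> omega
  · rw [hn, sq]; congr 1 <;> omega

/-- The maximum size of an antichain of `P_n` (componentwise order) is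
`m(m-1)` if `n = 2m` and `m²` if `n = 2m+1`. -/
theorem stmt17 (n m : ℕ) (hn : 2 ≤ n) :
    (n = 2 * m → IsGreatest
      {s | ∃ A : Set (ℕ × ℕ × ℕ),
        A ⊆ PnSet n ∧ IsAntichain (· ≤ ·) A ∧ A.ncard = s} (m * (m - 1))) ∧
    (n = 2 * m + 1 → IsGreatest
      {s | ∃ A : Set (ℕ × ℕ × ℕ),
        A ⊆ PnSet n ∧ IsAntichain (· ≤ ·) A ∧ A.ncard = s} (m ^ 2)) :=
  stmt17_general n m
end
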